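/- arXiv:2601.07455 — 12 statements merged into one kernel-verified Lean document; each statement's English description precedes it below -/
import Mathlib

section
/- The block matrix K = [[M, A], [Aᵀ, −N]] is invertible (every symmetric quasi-definite matrix is nonsingular). -/
open Matrix

/-- Every symmetric quasi-definite matrix `K = [[M, A], [Aᵀ, −N]]` is nonsingular. -/
theorem sqd_block_matrix_nonsingular (m n : ℕ)
    (M : Matrix (Fin m) (Fin m) ℝ) (N : Matrix (Fin n) (Fin n) ℝ)
    (A : Matrix (Fin m) (Fin n) ℝ)
    (hM : M.PosDef) (hN : N.PosDef) :
    IsUnit (Matrix.fromBlocks M A Aᵀ (-N)).det := by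
  have hMu : IsUnit M.det := isUnit_iff_ne_zero.2 hM.det_pos.ne'
  have : Invertible M := M.invertibleOfIsUnitDet hMu
  rw [det_fromBlocks₁₁]
  have hinv : (⅟ M) = M⁻¹ := invOf_eq_nonsing_inv M
  have hS : (N + Aᵀ * M⁻¹ * A).PosDef := by
    refine hN.add_posSemidef ?_
    have := hM.inv.posSemidef.conjTranspose_mul_mul_same A
    simpa using this
  have : (-N - Aᵀ * ⅟ M * A) = -(N + Aᵀ * M⁻¹ * A) := by
    rw [hinv]; abel
  rw [this, det_neg]
  simp only [Fintype.card_fin]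
  exact hMu.mul ((isUnit_one.neg.pow n).mul (isUnit_iff_ne_zero.2 hS.det_pos.ne'))
end

section
/- The deflation projector commutes with K in the sense that 𝒫 K = K 𝒫ᵀ. -/
open Matrix

/-- The deflation projector commutes with `K` in the sense that `Pcal K = K Pcalᵀ`. -/
theorem deflation_projector_commutes_with_K (m n k : ℕ)
    (M : Matrix (Fin m) (Fin m) ℝ) (N : Matrix (Fin n) (Fin n) ℝ)
    (A : Matrix (Fin m) (Fin n) ℝ)
    (hM : M.PosDef) (hN : N.PosDef)
    (Uk : Matrix (Fin m) (Fin k) ℝ) (Vk : Matrix (Fin n) (Fin k) ℝ)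
    (Sig : Matrix (Fin k) (Fin k) ℝ)
    (hSigDiag : ∀ i j, i ≠ j → Sig i j = 0) (hSigNonneg : ∀ i, 0 ≤ Sig i i)
    (hUk : Ukᵀ * M * Uk = 1) (hVk : Vkᵀ * N * Vk = 1)
    (hAV : A * Vk = M * Uk * Sig) (hAU : Aᵀ * Uk = N * Vk * Sig)
    (P : Matrix (Fin m) (Fin m) ℝ) (hP : P = 1 - M * Uk * Ukᵀ)
    (Q : Matrix (Fin n) (Fin n) ℝ) (hQ : Q = 1 - Vk * Vkᵀ * N)
    (K : Matrix (Fin m ⊕ Fin n) (Fin m ⊕ Fin n) ℝ)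
    (hK : K = Matrix.fromBlocks M A Aᵀ (-N))
    (Pcal : Matrix (Fin m ⊕ Fin n) (Fin m ⊕ Fin n) ℝ)
    (hPcal : Pcal = Matrix.fromBlocks P 0 0 Qᵀ) :
    Pcal * K = K * Pcalᵀ := by
  have hMT : Mᵀ = M := by
    have := hM.isHermitian
    simpa [Matrix.IsHermitian, Matrix.conjTranspose_eq_transpose_of_trivial] using this
  have hNT : Nᵀ = N := by
    have := hN.isHermitian
    simpa [Matrix.IsHermitian, Matrix.conjTranspose_eq_transpose_of_trivial] using this
  have hSigT : Sigᵀ = Sig := by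
    ext i j
    by_cases h : i = j
    · subst h; rfl
    · rw [Matrix.transpose_apply, hSigDiag j i (Ne.symm h), hSigDiag i j h]
  have key1 : Ukᵀ * A = Sig * (Vkᵀ * N) := by
    have := congrArg Matrix.transpose hAU
    simpa [Matrix.transpose_mul, hNT, hSigT, Matrix.mul_assoc] using this
  have key2 : Vkᵀ * Aᵀ = Sig * (Ukᵀ * M) := by
    have := congrArg Matrix.transpose hAV
    simpa [Matrix.transpose_mul, hMT, hSigT, Matrix.mul_assoc] using this
  have e1 : M * (Uk * (Ukᵀ * A)) = A * (Vk * (Vkᵀ * N)) := by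
    rw [key1, ← Matrix.mul_assoc, ← Matrix.mul_assoc, ← hAV, Matrix.mul_assoc]
  have e2 : N * (Vk * (Vkᵀ * Aᵀ)) = Aᵀ * (Uk * (Ukᵀ * M)) := by
    rw [key2, ← Matrix.mul_assoc, ← Matrix.mul_assoc, ← hAU, Matrix.mul_assoc]
  subst hP hQ hK hPcal
  rw [Matrix.fromBlocks_transpose, Matrix.fromBlocks_multiply, Matrix.fromBlocks_multiply]
  simp only [Matrix.transpose_sub, Matrix.transpose_mul, Matrix.transpose_one,
    Matrix.transpose_transpose, Matrix.transpose_zero, hMT, hNT,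
    Matrix.mul_zero, Matrix.zero_mul, add_zero, zero_add,
    Matrix.mul_sub, Matrix.sub_mul, Matrix.mul_one, Matrix.one_mul,
    Matrix.mul_neg, Matrix.neg_mul, neg_sub, Matrix.mul_assoc, e1, e2]
  simp only [neg_zero, add_zero]
  congr 1
  abel
end

section
/- The deflation projector admits the representation 𝒫 = I_{m+n} − K Z_k (Z_kᵀ K Z_k)⁻¹ Z_kᵀ. -/
/-!
Write `Y = diag(M Ũ_k, N Ṽ_k)` and `W = [[I, Σ_k], [Σ_k, −I]]`. The singular-triplet relations
factor `K Z_k = Y W`, and `Z_kᵀ Y = I` by the `M`- and `N`-orthonormality of `Ũ_k` and `Ṽ_k`,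
so `Z_kᵀ K Z_k = W`. Since `Σ_k = Ũ_kᵀ A Ṽ_k` is symmetric, the Schur complement `−(I + Σ_kᵀ Σ_k)`
of `W` is negative definite and `W` is invertible. Hence `K Z_k W⁻¹ Z_kᵀ = Y Z_kᵀ
= diag(M Ũ_k Ũ_kᵀ, N Ṽ_k Ṽ_kᵀ)`, and `N Ṽ_k Ṽ_kᵀ = (Ṽ_k Ṽ_kᵀ N)ᵀ` because `N` is symmetric.
-/

open Matrix

namespace Matrix

variable {l m n : Type*} [Fintype m] [Fintype n]

theorem isUnit_det_fromBlocks_one_neg_one [Fintype l] [DecidableEq l] {S : Matrix l l ℝ}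
    (hS : S.IsSymm) : IsUnit (fromBlocks 1 S S (-1)).det := by
  have hpos : (1 + Sᵀ * S).PosDef :=
    PosDef.one.add_posSemidef (posSemidef_conjTranspose_mul_self S)
  have hschur : -1 - S * S = -(1 + Sᵀ * S) := by rw [hS.eq]; abel
  rw [det_fromBlocks_one₁₁, hschur, det_neg]
  exact (isUnit_neg_one.pow _).mul hpos.det_pos.ne'.isUnit

variable {R : Type*} [CommRing R]

theorem isSymm_of_singular_relations [Fintype l] [DecidableEq l]
    {M : Matrix m m R} {N : Matrix n n R} {A : Matrix m n R}
    {U : Matrix m l R} {V : Matrix n l R} {S : Matrix l l R}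
    (hU : Uᵀ * M * U = 1) (hV : Vᵀ * N * V = 1)
    (hAV : A * V = M * U * S) (hAU : Aᵀ * U = N * V * S) : S.IsSymm := by
  have hS : Uᵀ * A * V = S := by
    rw [Matrix.mul_assoc, hAV, ← Matrix.mul_assoc, ← Matrix.mul_assoc, hU, one_mul]
  have hSt : Vᵀ * Aᵀ * U = S := by
    rw [Matrix.mul_assoc, hAU, ← Matrix.mul_assoc, ← Matrix.mul_assoc, hV, one_mul]
  calc Sᵀ = (Uᵀ * A * V)ᵀ := by rw [hS]
    _ = Vᵀ * Aᵀ * U := by rw [transpose_mul, transpose_mul, transpose_transpose, Matrix.mul_assoc]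
    _ = S := hSt

theorem fromBlocks_mul_fromBlocks_eq_of_singular_relations [Fintype l] [DecidableEq l]
    {M : Matrix m m R} {N : Matrix n n R} {A : Matrix m n R}
    {U : Matrix m l R} {V : Matrix n l R} {S : Matrix l l R}
    (hAV : A * V = M * U * S) (hAU : Aᵀ * U = N * V * S) :
    fromBlocks M A Aᵀ (-N) * fromBlocks U 0 0 V =
      fromBlocks (M * U) 0 0 (N * V) * fromBlocks 1 S S (-1) := by
  simp only [fromBlocks_multiply, hAV, hAU, Matrix.mul_zero, Matrix.zero_mul, Matrix.mul_one,
    Matrix.mul_neg, Matrix.neg_mul, neg_zero, add_zero, zero_add]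

theorem transpose_fromBlocks_mul_fromBlocks_eq_one [DecidableEq l]
    {M : Matrix m m R} {N : Matrix n n R} {U : Matrix m l R} {V : Matrix n l R}
    (hU : Uᵀ * M * U = 1) (hV : Vᵀ * N * V = 1) :
    (fromBlocks U 0 0 V)ᵀ * fromBlocks (M * U) 0 0 (N * V) = 1 := by
  simp only [fromBlocks_transpose, transpose_zero, fromBlocks_multiply, ← Matrix.mul_assoc, hU,
    hV, Matrix.mul_zero, Matrix.zero_mul, add_zero, zero_add, fromBlocks_one]

end Matrix

theorem deflation_projector_representation_general (m n k : ℕ)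
    (M : Matrix (Fin m) (Fin m) ℝ) (N : Matrix (Fin n) (Fin n) ℝ)
    (A : Matrix (Fin m) (Fin n) ℝ)
    (hN : N.PosDef)
    (Uk : Matrix (Fin m) (Fin k) ℝ) (Vk : Matrix (Fin n) (Fin k) ℝ)
    (Sig : Matrix (Fin k) (Fin k) ℝ)
    (hUk : Ukᵀ * M * Uk = 1) (hVk : Vkᵀ * N * Vk = 1)
    (hAV : A * Vk = M * Uk * Sig) (hAU : Aᵀ * Uk = N * Vk * Sig)
    (P : Matrix (Fin m) (Fin m) ℝ) (hP : P = 1 - M * Uk * Ukᵀ)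
    (Q : Matrix (Fin n) (Fin n) ℝ) (hQ : Q = 1 - Vk * Vkᵀ * N)
    (K : Matrix (Fin m ⊕ Fin n) (Fin m ⊕ Fin n) ℝ)
    (hK : K = Matrix.fromBlocks M A Aᵀ (-N))
    (Pcal : Matrix (Fin m ⊕ Fin n) (Fin m ⊕ Fin n) ℝ)
    (hPcal : Pcal = Matrix.fromBlocks P 0 0 Qᵀ)
    (Z : Matrix (Fin m ⊕ Fin n) (Fin k ⊕ Fin k) ℝ)
    (hZ : Z = Matrix.fromBlocks Uk 0 0 Vk) :
    Pcal = 1 - K * Z * (Zᵀ * K * Z)⁻¹ * Zᵀ := by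
  have hKZ : K * Z = fromBlocks (M * Uk) 0 0 (N * Vk) * fromBlocks 1 Sig Sig (-1) := by
    rw [hK, hZ, fromBlocks_mul_fromBlocks_eq_of_singular_relations hAV hAU]
  have hW : Zᵀ * K * Z = fromBlocks 1 Sig Sig (-1) := by
    rw [Matrix.mul_assoc, hKZ, ← Matrix.mul_assoc, hZ,
      transpose_fromBlocks_mul_fromBlocks_eq_one hUk hVk, Matrix.one_mul]
  have hWdet : IsUnit (fromBlocks 1 Sig Sig (-1)).det :=
    isUnit_det_fromBlocks_one_neg_one (isSymm_of_singular_relations hUk hVk hAV hAU)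
  have hQt : (1 - Vk * Vkᵀ * N)ᵀ = 1 - N * Vk * Vkᵀ := by
    rw [transpose_sub, transpose_one, transpose_mul, transpose_mul, transpose_transpose,
      (isHermitian_iff_isSymm.mp hN.isHermitian).eq, Matrix.mul_assoc]
  rw [hPcal, hP, hQ, hQt, hW, hKZ, mul_nonsing_inv_cancel_right _ _ hWdet, hZ]
  simp only [fromBlocks_transpose, transpose_zero, fromBlocks_multiply, Matrix.mul_zero,
    Matrix.zero_mul, add_zero, zero_add]
  ext (i | i) (j | j) <;> simp [one_apply, Matrix.mul_assoc]

/-- The deflation projector admits the representation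
`Pcal = I − K Z_k (Z_kᵀ K Z_k)⁻¹ Z_kᵀ`. -/
theorem deflation_projector_representation (m n k : ℕ)
    (M : Matrix (Fin m) (Fin m) ℝ) (N : Matrix (Fin n) (Fin n) ℝ)
    (A : Matrix (Fin m) (Fin n) ℝ)
    (hM : M.PosDef) (hN : N.PosDef)
    (Uk : Matrix (Fin m) (Fin k) ℝ) (Vk : Matrix (Fin n) (Fin k) ℝ)
    (Sig : Matrix (Fin k) (Fin k) ℝ)
    (hSigDiag : ∀ i j, i ≠ j → Sig i j = 0) (hSigNonneg : ∀ i, 0 ≤ Sig i i)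
    (hUk : Ukᵀ * M * Uk = 1) (hVk : Vkᵀ * N * Vk = 1)
    (hAV : A * Vk = M * Uk * Sig) (hAU : Aᵀ * Uk = N * Vk * Sig)
    (P : Matrix (Fin m) (Fin m) ℝ) (hP : P = 1 - M * Uk * Ukᵀ)
    (Q : Matrix (Fin n) (Fin n) ℝ) (hQ : Q = 1 - Vk * Vkᵀ * N)
    (K : Matrix (Fin m ⊕ Fin n) (Fin m ⊕ Fin n) ℝ)
    (hK : K = Matrix.fromBlocks M A Aᵀ (-N))
    (Pcal : Matrix (Fin m ⊕ Fin n) (Fin m ⊕ Fin n) ℝ)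
    (hPcal : Pcal = Matrix.fromBlocks P 0 0 Qᵀ)
    (Z : Matrix (Fin m ⊕ Fin n) (Fin k ⊕ Fin k) ℝ)
    (hZ : Z = Matrix.fromBlocks Uk 0 0 Vk) :
    Pcal = 1 - K * Z * (Zᵀ * K * Z)⁻¹ * Zᵀ :=
  deflation_projector_representation_general m n k M N A hN Uk Vk Sig hUk hVk hAV hAU P hP Q hQ K hK
    Pcal hPcal Z hZ
end

section
/- If ũ ∈ ℝ^{m+n} is a solution of the deflated system 𝒫 K ũ = 𝒫 f, then the vector u = Z_k (Z_kᵀ K Z_k)⁻¹ Z_kᵀ f + 𝒫ᵀ ũ satisfies K u = f. -/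
/-!
With `W = Zᵀ K Z`, the triplet relations give `K Z = diag(M Ũ, N Ṽ) W` and
`Zᵀ diag(M Ũ, N Ṽ) = I`, and `W² = diag(I + Σ², I + Σ²)` is invertible. Hence
`K Z W⁻¹ Zᵀ = diag(M Ũ Ũᵀ, N Ṽ Ṽᵀ)`, i.e. `𝒫` is the deflation projector `I - K Z W⁻¹ Zᵀ`.
Since `K` and `W` are symmetric, `K 𝒫ᵀ = 𝒫 K`, so
`K u = (I - 𝒫) f + 𝒫 K ũ = (I - 𝒫) f + 𝒫 f = f`.
-/

open Matrix

namespace Matrix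

section Deflation

variable {R ι κ : Type*} [CommRing R] [Fintype ι] [Fintype κ] [DecidableEq ι] [DecidableEq κ]

noncomputable def deflationProj (K : Matrix ι ι R) (Z : Matrix ι κ R) : Matrix ι ι R :=
  1 - K * Z * (Zᵀ * K * Z)⁻¹ * Zᵀ

theorem IsSymm.mul_deflationProj_transpose {K : Matrix ι ι R} (hK : K.IsSymm)
    (Z : Matrix ι κ R) : K * (deflationProj K Z)ᵀ = deflationProj K Z * K := by
  simp only [deflationProj, transpose_sub, transpose_one, transpose_mul, transpose_nonsing_inv,
    transpose_transpose, hK.eq, Matrix.mul_sub, Matrix.sub_mul, Matrix.mul_one,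
    Matrix.one_mul, Matrix.mul_assoc]

theorem IsSymm.mulVec_correction_of_deflated_solution {K : Matrix ι ι R} (hK : K.IsSymm)
    (Z : Matrix ι κ R) {f ut : ι → R}
    (hut : (deflationProj K Z * K) *ᵥ ut = deflationProj K Z *ᵥ f) :
    K *ᵥ (Z *ᵥ ((Zᵀ * K * Z)⁻¹ *ᵥ (Zᵀ *ᵥ f)) + (deflationProj K Z)ᵀ *ᵥ ut) = f := by
  have hcoarse : K * Z * (Zᵀ * K * Z)⁻¹ * Zᵀ = 1 - deflationProj K Z := by
    rw [deflationProj, sub_sub_cancel]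
  calc _ = (K * Z * (Zᵀ * K * Z)⁻¹ * Zᵀ) *ᵥ f + (K * (deflationProj K Z)ᵀ) *ᵥ ut := by
        simp only [mulVec_add, mulVec_mulVec, Matrix.mul_assoc]
    _ = (1 - deflationProj K Z) *ᵥ f + deflationProj K Z *ᵥ f := by
        rw [hcoarse, hK.mul_deflationProj_transpose, hut]
    _ = f := by rw [sub_mulVec, one_mulVec, sub_add_cancel]

end Deflation

section SingularTriplets

variable {R m n k : Type*} [CommRing R] [Fintype m] [Fintype n] [Fintype k]
  [DecidableEq k] {M : Matrix m m R} {N : Matrix n n R} {A : Matrix m n R}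
  {U : Matrix m k R} {V : Matrix n k R} {S : Matrix k k R}

theorem fromBlocks_mul_fromBlocks_of_singular_triplets
    (hAV : A * V = M * U * S) (hAU : Aᵀ * U = N * V * S) :
    fromBlocks M A Aᵀ (-N) * fromBlocks U 0 0 V =
      fromBlocks (M * U) 0 0 (N * V) * fromBlocks 1 S S (-1) := by
  simp [fromBlocks_multiply, hAV, hAU, Matrix.mul_assoc]

variable [DecidableEq m] [DecidableEq n]

theorem deflationProj_fromBlocks_of_singular_triplets (hN : N.IsSymm)
    (hUU : Uᵀ * M * U = 1) (hVV : Vᵀ * N * V = 1)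
    (hAV : A * V = M * U * S) (hAU : Aᵀ * U = N * V * S)
    (hS : IsUnit (fromBlocks 1 S S (-1)).det) :
    deflationProj (fromBlocks M A Aᵀ (-N)) (fromBlocks U 0 0 V) =
      fromBlocks (1 - M * U * Uᵀ) 0 0 (1 - V * Vᵀ * N)ᵀ := by
  set W := fromBlocks 1 S S (-1)
  set Z := fromBlocks U 0 0 V
  set D := fromBlocks (M * U) 0 0 (N * V)
  have hKZ := fromBlocks_mul_fromBlocks_of_singular_triplets hAV hAU
  have hZD : Zᵀ * D = 1 := by
    simp [Z, D, fromBlocks_transpose, fromBlocks_multiply, ← Matrix.mul_assoc, hUU, hVV]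
  have hW : Zᵀ * fromBlocks M A Aᵀ (-N) * Z = W := by
    rw [Matrix.mul_assoc, hKZ, ← Matrix.mul_assoc, hZD, Matrix.one_mul]
  rw [deflationProj, hW, hKZ, Matrix.mul_assoc D, mul_nonsing_inv _ hS, Matrix.mul_one]
  simp [D, Z, fromBlocks_transpose, fromBlocks_multiply, hN.eq, Matrix.mul_assoc,
    sub_eq_add_neg, ← fromBlocks_one, fromBlocks_neg, fromBlocks_add]

end SingularTriplets

theorem fromBlocks_one_self_self_neg_one_mul_self {R k : Type*} [CommRing R] [Fintype k]
    [DecidableEq k] (S : Matrix k k R) :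
    fromBlocks 1 S S (-1) * fromBlocks 1 S S (-1) = fromBlocks (1 + S * S) 0 0 (1 + S * S) := by
  simp [fromBlocks_multiply, add_comm]

open scoped ComplexOrder in
theorem isUnit_det_fromBlocks_one_self_self_neg_one_of_isHermitian {𝕜 k : Type*} [RCLike 𝕜]
    [Fintype k] [DecidableEq k] {S : Matrix k k 𝕜} (hS : S.IsHermitian) :
    IsUnit (fromBlocks 1 S S (-1)).det := by
  have hpos : (1 + S * S).PosDef := by
    simpa [hS.eq] using PosDef.one.add_posSemidef (posSemidef_conjTranspose_mul_self S)
  have hsq : IsUnit (fromBlocks 1 S S (-1) * fromBlocks 1 S S (-1)).det := by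
    rw [fromBlocks_one_self_self_neg_one_mul_self, det_fromBlocks_zero₁₂]
    exact (hpos.det_pos.ne'.isUnit).mul hpos.det_pos.ne'.isUnit
  rw [det_mul] at hsq
  exact isUnit_of_mul_isUnit_left hsq

end Matrix

theorem deflated_solution_correction_general (m n k : ℕ)
    (M : Matrix (Fin m) (Fin m) ℝ) (N : Matrix (Fin n) (Fin n) ℝ)
    (A : Matrix (Fin m) (Fin n) ℝ)
    (hM : M.PosDef) (hN : N.PosDef)
    (Uk : Matrix (Fin m) (Fin k) ℝ) (Vk : Matrix (Fin n) (Fin k) ℝ)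
    (Sig : Matrix (Fin k) (Fin k) ℝ)
    (hSigDiag : ∀ i j, i ≠ j → Sig i j = 0)
    (hUk : Ukᵀ * M * Uk = 1) (hVk : Vkᵀ * N * Vk = 1)
    (hAV : A * Vk = M * Uk * Sig) (hAU : Aᵀ * Uk = N * Vk * Sig)
    (P : Matrix (Fin m) (Fin m) ℝ) (hP : P = 1 - M * Uk * Ukᵀ)
    (Q : Matrix (Fin n) (Fin n) ℝ) (hQ : Q = 1 - Vk * Vkᵀ * N)
    (K : Matrix (Fin m ⊕ Fin n) (Fin m ⊕ Fin n) ℝ)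
    (hK : K = Matrix.fromBlocks M A Aᵀ (-N))
    (Pcal : Matrix (Fin m ⊕ Fin n) (Fin m ⊕ Fin n) ℝ)
    (hPcal : Pcal = Matrix.fromBlocks P 0 0 Qᵀ)
    (Z : Matrix (Fin m ⊕ Fin n) (Fin k ⊕ Fin k) ℝ)
    (hZ : Z = Matrix.fromBlocks Uk 0 0 Vk)
    (f ut : Fin m ⊕ Fin n → ℝ)
    (hut : (Pcal * K).mulVec ut = Pcal.mulVec f)
    (u : Fin m ⊕ Fin n → ℝ)
    (hu : u = Z.mulVec (((Zᵀ * K * Z)⁻¹).mulVec (Zᵀ.mulVec f)) + Pcalᵀ.mulVec ut) :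
    K.mulVec u = f := by
  have hMsymm : M.IsSymm := isHermitian_iff_isSymm.1 hM.isHermitian
  have hNsymm : N.IsSymm := isHermitian_iff_isSymm.1 hN.isHermitian
  have hSig : Sig.IsHermitian := isHermitian_iff_isSymm.2 (IsDiag.isSymm fun i j => hSigDiag i j)
  have hKsymm : K.IsSymm := hK ▸ hMsymm.fromBlocks rfl hNsymm.neg
  have hPcal_eq : Pcal = deflationProj K Z := by
    rw [hPcal, hP, hQ, hK, hZ,
      deflationProj_fromBlocks_of_singular_triplets hNsymm hUk hVk hAV hAU
        (isUnit_det_fromBlocks_one_self_self_neg_one_of_isHermitian hSig)]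
  subst hu
  rw [hPcal_eq] at hut ⊢
  exact hKsymm.mulVec_correction_of_deflated_solution Z hut

/-- If `ũ` solves the deflated system `Pcal K ũ = Pcal f`, then
`u = Z_k (Z_kᵀ K Z_k)⁻¹ Z_kᵀ f + Pcalᵀ ũ` satisfies `K u = f`. -/
theorem deflated_solution_correction (m n k : ℕ)
    (M : Matrix (Fin m) (Fin m) ℝ) (N : Matrix (Fin n) (Fin n) ℝ)
    (A : Matrix (Fin m) (Fin n) ℝ)
    (hM : M.PosDef) (hN : N.PosDef)
    (Uk : Matrix (Fin m) (Fin k) ℝ) (Vk : Matrix (Fin n) (Fin k) ℝ)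
    (Sig : Matrix (Fin k) (Fin k) ℝ)
    (hSigDiag : ∀ i j, i ≠ j → Sig i j = 0) (hSigNonneg : ∀ i, 0 ≤ Sig i i)
    (hUk : Ukᵀ * M * Uk = 1) (hVk : Vkᵀ * N * Vk = 1)
    (hAV : A * Vk = M * Uk * Sig) (hAU : Aᵀ * Uk = N * Vk * Sig)
    (P : Matrix (Fin m) (Fin m) ℝ) (hP : P = 1 - M * Uk * Ukᵀ)
    (Q : Matrix (Fin n) (Fin n) ℝ) (hQ : Q = 1 - Vk * Vkᵀ * N)
    (K : Matrix (Fin m ⊕ Fin n) (Fin m ⊕ Fin n) ℝ)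
    (hK : K = Matrix.fromBlocks M A Aᵀ (-N))
    (Pcal : Matrix (Fin m ⊕ Fin n) (Fin m ⊕ Fin n) ℝ)
    (hPcal : Pcal = Matrix.fromBlocks P 0 0 Qᵀ)
    (Z : Matrix (Fin m ⊕ Fin n) (Fin k ⊕ Fin k) ℝ)
    (hZ : Z = Matrix.fromBlocks Uk 0 0 Vk)
    (f ut : Fin m ⊕ Fin n → ℝ)
    (hut : (Pcal * K).mulVec ut = Pcal.mulVec f)
    (u : Fin m ⊕ Fin n → ℝ)
    (hu : u = Z.mulVec (((Zᵀ * K * Z)⁻¹).mulVec (Zᵀ.mulVec f)) + Pcalᵀ.mulVec ut) :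
    K.mulVec u = f :=
  deflated_solution_correction_general m n k M N A hM hN Uk Vk Sig hSigDiag hUk hVk hAV hAU P hP Q
    hQ K hK Pcal hPcal Z hZ f ut hut u hu
end

section
/- For any vector ũ ∈ ℝ^{m+n}, if u = Z_k (Z_kᵀ K Z_k)⁻¹ Z_kᵀ f + 𝒫ᵀ ũ, then the residual satisfies f − K u = 𝒫 (f − K ũ). -/
open Matrix

private theorem fromBlocksSubAux {R : Type*} [Sub R] {n₁ n₂ m₁ m₂ : Type*}
    (A A' : Matrix n₁ m₁ R) (B B' : Matrix n₁ m₂ R)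
    (C C' : Matrix n₂ m₁ R) (D D' : Matrix n₂ m₂ R) :
    Matrix.fromBlocks A B C D - Matrix.fromBlocks A' B' C' D'
      = Matrix.fromBlocks (A - A') (B - B') (C - C') (D - D') := by
  ext (i | i) (j | j) <;> rfl

/-- For any vector `ũ`, if `u = Z_k (Z_kᵀ K Z_k)⁻¹ Z_kᵀ f + Pcalᵀ ũ`, then the residual
satisfies `f − K u = Pcal (f − K ũ)`. -/
theorem deflated_residual_relation (m n k : ℕ)
    (M : Matrix (Fin m) (Fin m) ℝ) (N : Matrix (Fin n) (Fin n) ℝ)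
    (A : Matrix (Fin m) (Fin n) ℝ)
    (hM : M.PosDef) (hN : N.PosDef)
    (Uk : Matrix (Fin m) (Fin k) ℝ) (Vk : Matrix (Fin n) (Fin k) ℝ)
    (Sig : Matrix (Fin k) (Fin k) ℝ)
    (hSigDiag : ∀ i j, i ≠ j → Sig i j = 0) (hSigNonneg : ∀ i, 0 ≤ Sig i i)
    (hUk : Ukᵀ * M * Uk = 1) (hVk : Vkᵀ * N * Vk = 1)
    (hAV : A * Vk = M * Uk * Sig) (hAU : Aᵀ * Uk = N * Vk * Sig)
    (P : Matrix (Fin m) (Fin m) ℝ) (hP : P = 1 - M * Uk * Ukᵀ)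
    (Q : Matrix (Fin n) (Fin n) ℝ) (hQ : Q = 1 - Vk * Vkᵀ * N)
    (K : Matrix (Fin m ⊕ Fin n) (Fin m ⊕ Fin n) ℝ)
    (hK : K = Matrix.fromBlocks M A Aᵀ (-N))
    (Pcal : Matrix (Fin m ⊕ Fin n) (Fin m ⊕ Fin n) ℝ)
    (hPcal : Pcal = Matrix.fromBlocks P 0 0 Qᵀ)
    (Z : Matrix (Fin m ⊕ Fin n) (Fin k ⊕ Fin k) ℝ)
    (hZ : Z = Matrix.fromBlocks Uk 0 0 Vk)
    (f ut : Fin m ⊕ Fin n → ℝ)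
    (u : Fin m ⊕ Fin n → ℝ)
    (hu : u = Z.mulVec (((Zᵀ * K * Z)⁻¹).mulVec (Zᵀ.mulVec f)) + Pcalᵀ.mulVec ut) :
    f - K.mulVec u = Pcal.mulVec (f - K.mulVec ut) := by
  have hMsymm : Mᵀ = M := hM.isHermitian.eq
  have hNsymm : Nᵀ = N := hN.isHermitian.eq
  -- Sig is diagonal
  set d : Fin k → ℝ := fun i => Sig i i with hd
  have hSd : Sig = Matrix.diagonal d := by
    ext i j
    by_cases h : i = j
    · subst h; simp [Matrix.diagonal, hd]
    · rw [hSigDiag i j h, Matrix.diagonal_apply_ne _ h]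
  have hSigT : Sigᵀ = Sig := by rw [hSd]; exact Matrix.diagonal_transpose d
  -- mixed products
  have hUAV : Ukᵀ * A * Vk = Sig := by
    rw [Matrix.mul_assoc, hAV, ← Matrix.mul_assoc, ← Matrix.mul_assoc, hUk, Matrix.one_mul]
  have hVAU : Vkᵀ * Aᵀ * Uk = Sig := by
    rw [Matrix.mul_assoc, hAU, ← Matrix.mul_assoc, ← Matrix.mul_assoc, hVk, Matrix.one_mul]
  -- W = Zᵀ K Z
  have hW : Zᵀ * K * Z = Matrix.fromBlocks 1 Sig Sig (-1) := by
    rw [hZ, hK, Matrix.fromBlocks_transpose, Matrix.fromBlocks_multiply,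
      Matrix.fromBlocks_multiply]
    simp only [Matrix.transpose_zero, Matrix.mul_zero, Matrix.zero_mul, add_zero,
      zero_add, neg_zero, Matrix.neg_mul]
    rw [hUk, hUAV, hVAU, Matrix.mul_neg, Matrix.neg_mul, hVk]
  set W : Matrix (Fin k ⊕ Fin k) (Fin k ⊕ Fin k) ℝ := Matrix.fromBlocks 1 Sig Sig (-1) with hWdef
  -- explicit inverse of W
  set E : Matrix (Fin k) (Fin k) ℝ := Matrix.diagonal (fun i => (1 + d i ^ 2)⁻¹) with hE
  have hpos : ∀ i : Fin k, (1 : ℝ) + d i ^ 2 ≠ 0 := fun i => by positivity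
  have hEone : E + Sig * Sig * E = 1 := by
    rw [hSd, hE, Matrix.diagonal_mul_diagonal, Matrix.diagonal_mul_diagonal,
      Matrix.diagonal_add, ← Matrix.diagonal_one]
    refine congrArg Matrix.diagonal (funext fun i => ?_)
    rw [show (1 + d i ^ 2)⁻¹ + d i * d i * (1 + d i ^ 2)⁻¹
        = (1 + d i ^ 2) * (1 + d i ^ 2)⁻¹ from by ring, mul_inv_cancel₀ (hpos i)]
  have hWinv : W * Matrix.fromBlocks E (Sig * E) (Sig * E) (-E) = 1 := by
    rw [hWdef, Matrix.fromBlocks_multiply,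
      show (1 : Matrix (Fin k ⊕ Fin k) (Fin k ⊕ Fin k) ℝ) = Matrix.fromBlocks 1 0 0 1 from
        Matrix.fromBlocks_one.symm, Matrix.fromBlocks_inj]
    refine ⟨?_, ?_, ?_, ?_⟩
    · rw [Matrix.one_mul, ← Matrix.mul_assoc]; exact hEone
    · simp [Matrix.mul_neg]
    · simp [Matrix.neg_mul]
    · rw [Matrix.neg_mul, Matrix.one_mul, neg_neg, ← Matrix.mul_assoc, add_comm]; exact hEone
  have hWinv' : W⁻¹ = Matrix.fromBlocks E (Sig * E) (Sig * E) (-E) :=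
    Matrix.inv_eq_right_inv hWinv
  have hWWinv : W * W⁻¹ = 1 := by rw [hWinv']; exact hWinv
  -- K Z = B W with B = diag(M Uk, N Vk)
  set B : Matrix (Fin m ⊕ Fin n) (Fin k ⊕ Fin k) ℝ :=
    Matrix.fromBlocks (M * Uk) 0 0 (N * Vk) with hB
  have hKZ : K * Z = B * W := by
    rw [hK, hZ, hB, hWdef, Matrix.fromBlocks_multiply, Matrix.fromBlocks_multiply]
    simp only [Matrix.mul_zero, Matrix.zero_mul, add_zero, zero_add,
      Matrix.mul_one, Matrix.mul_neg, Matrix.neg_mul, neg_zero]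
    rw [hAV, hAU]
  -- K Z W⁻¹ Zᵀ = 1 - Pcal
  have hkey : K * Z * W⁻¹ * Zᵀ = 1 - Pcal := by
    rw [hKZ, Matrix.mul_assoc B W W⁻¹, hWWinv, Matrix.mul_one, hB, hZ, hPcal, hP, hQ,
      Matrix.fromBlocks_transpose,
      show (1 : Matrix (Fin m ⊕ Fin n) (Fin m ⊕ Fin n) ℝ) = Matrix.fromBlocks 1 0 0 1 from
        Matrix.fromBlocks_one.symm, fromBlocksSubAux, Matrix.fromBlocks_multiply,
      Matrix.fromBlocks_inj]
    refine ⟨?_, by simp, by simp, ?_⟩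
    · simp [sub_sub_cancel, Matrix.mul_assoc]
    · simp [Matrix.transpose_sub, Matrix.transpose_mul, Matrix.transpose_transpose,
        hNsymm, sub_sub_cancel, Matrix.mul_assoc]
  -- transposed elliptic relations
  have hUA : Ukᵀ * A = Sig * (Vkᵀ * N) := by
    have h := congrArg Matrix.transpose hAU
    simpa [Matrix.transpose_mul, Matrix.transpose_transpose, hSigT, hNsymm,
      Matrix.mul_assoc] using h
  have hVA : Vkᵀ * Aᵀ = Sig * (Ukᵀ * M) := by
    have h := congrArg Matrix.transpose hAV
    simpa [Matrix.transpose_mul, Matrix.transpose_transpose, hSigT, hMsymm,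
      Matrix.mul_assoc] using h
  have h1' : A * (Vk * (Vkᵀ * N)) = M * (Uk * (Ukᵀ * A)) := by
    calc A * (Vk * (Vkᵀ * N)) = (A * Vk) * (Vkᵀ * N) := by rw [Matrix.mul_assoc]
      _ = M * Uk * Sig * (Vkᵀ * N) := by rw [hAV]
      _ = M * (Uk * (Sig * (Vkᵀ * N))) := by rw [Matrix.mul_assoc, Matrix.mul_assoc]
      _ = M * (Uk * (Ukᵀ * A)) := by rw [hUA]
  have h2' : Aᵀ * (Uk * (Ukᵀ * M)) = N * (Vk * (Vkᵀ * Aᵀ)) := by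
    calc Aᵀ * (Uk * (Ukᵀ * M)) = (Aᵀ * Uk) * (Ukᵀ * M) := by rw [Matrix.mul_assoc]
      _ = N * Vk * Sig * (Ukᵀ * M) := by rw [hAU]
      _ = N * (Vk * (Sig * (Ukᵀ * M))) := by rw [Matrix.mul_assoc, Matrix.mul_assoc]
      _ = N * (Vk * (Vkᵀ * Aᵀ)) := by rw [hVA]
  -- K Pcalᵀ = Pcal K
  have hcomm : K * Pcalᵀ = Pcal * K := by
    rw [hK, hPcal, hP, hQ, Matrix.fromBlocks_transpose, Matrix.fromBlocks_multiply,
      Matrix.fromBlocks_multiply, Matrix.fromBlocks_inj]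
    refine ⟨?_, ?_, ?_, ?_⟩ <;>
      simp [Matrix.transpose_sub, Matrix.transpose_mul, Matrix.transpose_transpose,
        Matrix.transpose_one, hMsymm, hNsymm, Matrix.mul_sub, Matrix.sub_mul,
        Matrix.mul_neg, Matrix.neg_mul, Matrix.mul_assoc, h1', h2']
  -- conclude
  rw [hu, Matrix.mulVec_add, Matrix.mulVec_mulVec, Matrix.mulVec_mulVec,
    Matrix.mulVec_mulVec, hW]
  rw [hkey]
  have hc : K *ᵥ (Pcalᵀ *ᵥ ut) = Pcal *ᵥ (K *ᵥ ut) := by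
    rw [Matrix.mulVec_mulVec, Matrix.mulVec_mulVec, hcomm]
  rw [hc, Matrix.sub_mulVec, Matrix.one_mulVec, Matrix.mulVec_sub]
  abel
end

section
/- The null space of 𝒫 K equals the null space of 𝒫ᵀ, i.e., for every w ∈ ℝ^{m+n}, 𝒫 K w = 0 if and only if 𝒫ᵀ w = 0. -/
/-!
The block projector intertwines the saddle-point matrix with its transpose, `𝒫 K = K 𝒫ᵀ`:
blockwise this is `P M = M Pᵀ` and `Qᵀ N = N Q`, consequences of the symmetry of `M` and `N`,
and `P A = A Q`, which follows from `A Vₖ = M Uₖ Σ` and `Aᵀ Uₖ = N Vₖ Σ` with `Σ` symmetric.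
Moreover `K` is nonsingular: if `K (x, y) = 0`, testing against `(x, -y)` cancels the
off-diagonal blocks and leaves `xᵀ M x + yᵀ N y = 0`.
Hence `𝒫 K w = K (𝒫ᵀ w)` vanishes exactly when `𝒫ᵀ w` does.
-/

open Matrix

namespace Matrix

variable {m n k R : Type*} [Fintype m] [Fintype n] [Fintype k]

theorem eq_zero_of_fromBlocks_neg_mulVec_eq_zero {M : Matrix m m ℝ} {N : Matrix n n ℝ}
    (A : Matrix m n ℝ) (hM : M.PosDef) (hN : N.PosDef) {z : m ⊕ n → ℝ}
    (hz : fromBlocks M A Aᵀ (-N) *ᵥ z = 0) : z = 0 := by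
  set x := z ∘ Sum.inl
  set y := z ∘ Sum.inr
  have hsum : x ⬝ᵥ (M *ᵥ x) + y ⬝ᵥ (N *ᵥ y) = 0 := by
    have h := congrArg (Sum.elim x (-y) ⬝ᵥ ·) hz
    simp only [fromBlocks_mulVec, dotProduct_zero, sumElim_dotProduct_sumElim] at h
    rw [← h, neg_mulVec, dotProduct_add, dotProduct_add, neg_dotProduct, neg_dotProduct,
      dotProduct_neg, neg_neg, dotProduct_mulVec y Aᵀ, vecMul_transpose, dotProduct_comm _ x]
    ring
  have hx : 0 ≤ x ⬝ᵥ (M *ᵥ x) := hM.posSemidef.dotProduct_mulVec_nonneg x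
  have hy : 0 ≤ y ⬝ᵥ (N *ᵥ y) := hN.posSemidef.dotProduct_mulVec_nonneg y
  have hx0 : x = 0 := by
    by_contra hne
    linarith [star_trivial x ▸ hM.dotProduct_mulVec_pos hne]
  have hy0 : y = 0 := by
    by_contra hne
    linarith [star_trivial y ▸ hN.dotProduct_mulVec_pos hne]
  ext (i | i)
  · exact congrFun hx0 i
  · exact congrFun hy0 i

variable [CommRing R]

theorem mul_mulVec_eq_zero_iff_of_mul_eq_mul_transpose {P K : Matrix m m R}
    (hK : ∀ z, K *ᵥ z = 0 → z = 0) (hPK : P * K = K * Pᵀ) (w : m → R) :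
    (P * K) *ᵥ w = 0 ↔ Pᵀ *ᵥ w = 0 := by
  rw [hPK, ← mulVec_mulVec]
  exact ⟨hK _, fun h => by rw [h, mulVec_zero]⟩

theorem fromBlocks_diag_mul_fromBlocks_eq_mul_transpose {P M : Matrix m m R}
    {Q N : Matrix n n R} {A : Matrix m n R}
    (hPM : P * M = M * Pᵀ) (hPA : P * A = A * Q) (hQN : Qᵀ * N = N * Q) :
    fromBlocks P 0 0 Qᵀ * fromBlocks M A Aᵀ (-N) =
      fromBlocks M A Aᵀ (-N) * (fromBlocks P 0 0 Qᵀ)ᵀ := by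
  have hQA : Qᵀ * Aᵀ = Aᵀ * Pᵀ := by rw [← transpose_mul, ← hPA, transpose_mul]
  simp [fromBlocks_transpose, fromBlocks_multiply, hPM, hPA, hQN, hQA]

variable [DecidableEq m]

theorem one_sub_mul_mul_transpose_mul_self {S : Matrix m m R} (hS : S.IsSymm)
    (U : Matrix m k R) :
    (1 - S * U * Uᵀ) * S = S * (1 - S * U * Uᵀ)ᵀ := by
  rw [transpose_sub, transpose_one, transpose_mul, transpose_mul, transpose_transpose, hS.eq]
  simp only [Matrix.sub_mul, Matrix.mul_sub, Matrix.one_mul, Matrix.mul_one, Matrix.mul_assoc]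

theorem one_sub_mul_mul_transpose_mul_eq_mul [DecidableEq n] {M : Matrix m m R}
    {N : Matrix n n R} {A : Matrix m n R} {U : Matrix m k R} {V : Matrix n k R}
    {Sig : Matrix k k R} (hN : N.IsSymm) (hSig : Sig.IsSymm)
    (hAV : A * V = M * U * Sig) (hAU : Aᵀ * U = N * V * Sig) :
    (1 - M * U * Uᵀ) * A = A * (1 - V * Vᵀ * N) := by
  have hUA : Uᵀ * A = Sig * Vᵀ * N := by
    rw [← transpose_transpose A, ← transpose_mul, hAU, transpose_mul, transpose_mul, hN.eq,
      hSig.eq, Matrix.mul_assoc]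
  rw [Matrix.sub_mul, Matrix.mul_sub, Matrix.one_mul, Matrix.mul_one, Matrix.mul_assoc (M * U),
    hUA, ← Matrix.mul_assoc A, ← Matrix.mul_assoc A, hAV]
  simp only [Matrix.mul_assoc]

end Matrix

theorem nullspace_PK_eq_nullspace_Pt_general (m n k : ℕ)
    (M : Matrix (Fin m) (Fin m) ℝ) (N : Matrix (Fin n) (Fin n) ℝ)
    (A : Matrix (Fin m) (Fin n) ℝ)
    (hM : M.PosDef) (hN : N.PosDef)
    (Uk : Matrix (Fin m) (Fin k) ℝ) (Vk : Matrix (Fin n) (Fin k) ℝ)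
    (Sig : Matrix (Fin k) (Fin k) ℝ)
    (hSigDiag : ∀ i j, i ≠ j → Sig i j = 0)
    (hAV : A * Vk = M * Uk * Sig) (hAU : Aᵀ * Uk = N * Vk * Sig)
    (P : Matrix (Fin m) (Fin m) ℝ) (hP : P = 1 - M * Uk * Ukᵀ)
    (Q : Matrix (Fin n) (Fin n) ℝ) (hQ : Q = 1 - Vk * Vkᵀ * N)
    (K : Matrix (Fin m ⊕ Fin n) (Fin m ⊕ Fin n) ℝ)
    (hK : K = Matrix.fromBlocks M A Aᵀ (-N))
    (Pcal : Matrix (Fin m ⊕ Fin n) (Fin m ⊕ Fin n) ℝ)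
    (hPcal : Pcal = Matrix.fromBlocks P 0 0 Qᵀ) :
    ∀ w : Fin m ⊕ Fin n → ℝ, (Pcal * K).mulVec w = 0 ↔ Pcalᵀ.mulVec w = 0 := by
  have hMs : M.IsSymm := hM.isHermitian
  have hNs : N.IsSymm := hN.isHermitian
  have hQt : Q = (1 - N * Vk * Vkᵀ)ᵀ := by
    rw [hQ, transpose_sub, transpose_one, transpose_mul, transpose_mul, transpose_transpose,
      hNs.eq, Matrix.mul_assoc]
  have hPM : P * M = M * Pᵀ := hP ▸ one_sub_mul_mul_transpose_mul_self hMs Uk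
  have hQN : Qᵀ * N = N * Q := by
    rw [hQt, transpose_transpose]
    exact one_sub_mul_mul_transpose_mul_self hNs Vk
  have hPA : P * A = A * Q :=
    hP ▸ hQ ▸ one_sub_mul_mul_transpose_mul_eq_mul hNs (IsDiag.isSymm hSigDiag) hAV hAU
  subst hK hPcal
  exact mul_mulVec_eq_zero_iff_of_mul_eq_mul_transpose
    (fun _ => eq_zero_of_fromBlocks_neg_mulVec_eq_zero A hM hN)
    (fromBlocks_diag_mul_fromBlocks_eq_mul_transpose hPM hPA hQN)

/-- The null space of `Pcal K` equals the null space of `Pcalᵀ`. -/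
theorem nullspace_PK_eq_nullspace_Pt (m n k : ℕ)
    (M : Matrix (Fin m) (Fin m) ℝ) (N : Matrix (Fin n) (Fin n) ℝ)
    (A : Matrix (Fin m) (Fin n) ℝ)
    (hM : M.PosDef) (hN : N.PosDef)
    (Uk : Matrix (Fin m) (Fin k) ℝ) (Vk : Matrix (Fin n) (Fin k) ℝ)
    (Sig : Matrix (Fin k) (Fin k) ℝ)
    (hSigDiag : ∀ i j, i ≠ j → Sig i j = 0) (hSigNonneg : ∀ i, 0 ≤ Sig i i)
    (hUk : Ukᵀ * M * Uk = 1) (hVk : Vkᵀ * N * Vk = 1)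
    (hAV : A * Vk = M * Uk * Sig) (hAU : Aᵀ * Uk = N * Vk * Sig)
    (P : Matrix (Fin m) (Fin m) ℝ) (hP : P = 1 - M * Uk * Ukᵀ)
    (Q : Matrix (Fin n) (Fin n) ℝ) (hQ : Q = 1 - Vk * Vkᵀ * N)
    (K : Matrix (Fin m ⊕ Fin n) (Fin m ⊕ Fin n) ℝ)
    (hK : K = Matrix.fromBlocks M A Aᵀ (-N))
    (Pcal : Matrix (Fin m ⊕ Fin n) (Fin m ⊕ Fin n) ℝ)
    (hPcal : Pcal = Matrix.fromBlocks P 0 0 Qᵀ) :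
    ∀ w : Fin m ⊕ Fin n → ℝ, (Pcal * K).mulVec w = 0 ↔ Pcalᵀ.mulVec w = 0 :=
  nullspace_PK_eq_nullspace_Pt_general m n k M N A hM hN Uk Vk Sig hSigDiag hAV hAU P hP Q hQ K hK
    Pcal hPcal
end

section
/- Let u⋆ be the solution of K u⋆ = f and ũ⋆ any solution of 𝒫 K ũ⋆ = 𝒫 f. For any ũ ∈ ℝ^{m+n}, if u = Z_k (Z_kᵀ K Z_k)⁻¹ Z_kᵀ f + 𝒫ᵀ ũ, then the error satisfies u⋆ − u = 𝒫ᵀ (ũ⋆ − ũ). -/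
/-!
The elliptic singular triplets say exactly that `K Z = G Z T` for `G = diag(M, N)` and
`T = [[1, Σ], [Σ, -1]]`: the span of `Z` is invariant under `G⁻¹ K`. Together with `Zᵀ G Z = 1`
and the symmetry of `K` and `G` this forces `T = Zᵀ K Z` and `Zᵀ K = T Zᵀ G`, hence
`Z (Zᵀ K Z)⁻¹ Zᵀ K = 1 - 𝒫ᵀ` and `𝒫 K = K 𝒫ᵀ` for `𝒫 = 1 - G Z Zᵀ`. The second identity gives
`K 𝒫ᵀ ũ⋆ = 𝒫 f = K 𝒫ᵀ u⋆`, so `𝒫ᵀ ũ⋆ = 𝒫ᵀ u⋆` since the saddle-point matrix `K` is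
nonsingular; the first splits `u⋆` as `Z (Zᵀ K Z)⁻¹ Zᵀ f + 𝒫ᵀ u⋆`.
-/

open Matrix

namespace Matrix

section SaddlePoint

variable {m n : Type*} [Fintype m] [Fintype n]

theorem PosDef.eq_zero_of_dotProduct_mulVec_nonpos {M : Matrix n n ℝ} (hM : M.PosDef)
    {x : n → ℝ} (hx : x ⬝ᵥ M *ᵥ x ≤ 0) : x = 0 := by
  by_contra h
  have := hM.dotProduct_mulVec_pos h
  rw [star_trivial] at this
  linarith

theorem isUnit_fromBlocks_transpose_neg [DecidableEq m] [DecidableEq n] {M : Matrix m m ℝ}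
    {N : Matrix n n ℝ} (hM : M.PosDef) (hN : N.PosDef) (A : Matrix m n ℝ) :
    IsUnit (fromBlocks M A Aᵀ (-N)) := by
  refine mulVec_injective_iff_isUnit.1 ?_
  rw [← coe_mulVecLin, ← LinearMap.ker_eq_bot]
  refine ker_mulVecLin_eq_bot_iff.2 fun v hv => ?_
  obtain ⟨x, y, rfl⟩ : ∃ x y, v = Sum.elim x y :=
    ⟨v ∘ Sum.inl, v ∘ Sum.inr, (Sum.elim_comp_inl_inr v).symm⟩
  rw [fromBlocks_mulVec, Sum.elim_comp_inl, Sum.elim_comp_inr, ← Sum.elim_zero_zero,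
    Sum.elim_eq_iff] at hv
  obtain ⟨hv₁, hv₂⟩ := hv
  -- pairing the two block equations with `x` and `-y` cancels the coupling terms
  have hsum : x ⬝ᵥ M *ᵥ x + y ⬝ᵥ N *ᵥ y = 0 := by
    have h₁ := congrArg (x ⬝ᵥ ·) hv₁
    have h₂ := congrArg (y ⬝ᵥ ·) hv₂
    simp only [dotProduct_add, neg_mulVec, dotProduct_neg, dotProduct_zero] at h₁ h₂
    rw [dotProduct_mulVec y, vecMul_transpose, dotProduct_comm] at h₂
    linarith
  have hx := hM.posSemidef.dotProduct_mulVec_nonneg x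
  have hy := hN.posSemidef.dotProduct_mulVec_nonneg y
  rw [star_trivial] at hx hy
  rw [hM.eq_zero_of_dotProduct_mulVec_nonpos (x := x) (by linarith),
    hN.eq_zero_of_dotProduct_mulVec_nonpos (x := y) (by linarith), Sum.elim_zero_zero]

end SaddlePoint

section Deflation

variable {R ι κ : Type*} [CommRing R] [Fintype ι] [Fintype κ]
  {K G : Matrix ι ι R} {Z : Matrix ι κ R} {T : Matrix κ κ R}

section

variable [DecidableEq κ]

theorem transpose_mul_mul_eq_of_mul_eq (hKZ : K * Z = G * Z * T) (hZGZ : Zᵀ * G * Z = 1) :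
    Zᵀ * K * Z = T := by
  rw [Matrix.mul_assoc, hKZ, ← Matrix.mul_assoc, ← Matrix.mul_assoc, hZGZ, one_mul]

theorem transpose_mul_eq_of_mul_eq (hK : Kᵀ = K) (hG : Gᵀ = G) (hKZ : K * Z = G * Z * T)
    (hZGZ : Zᵀ * G * Z = 1) : Zᵀ * K = T * Zᵀ * G := by
  have hTsymm : Tᵀ = T := by
    rw [← transpose_mul_mul_eq_of_mul_eq hKZ hZGZ, transpose_mul, transpose_mul,
      transpose_transpose, hK, Matrix.mul_assoc]
  calc Zᵀ * K = (K * Z)ᵀ := by rw [transpose_mul, hK]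
    _ = T * Zᵀ * G := by rw [hKZ, transpose_mul, transpose_mul, hTsymm, hG, Matrix.mul_assoc]

theorem mul_inv_mul_transpose_mul_eq (hK : Kᵀ = K) (hG : Gᵀ = G)
    (hKZ : K * Z = G * Z * T) (hZGZ : Zᵀ * G * Z = 1) (hT : IsUnit T) :
    Z * (Zᵀ * K * Z)⁻¹ * Zᵀ * K = Z * Zᵀ * G := by
  rw [transpose_mul_mul_eq_of_mul_eq hKZ hZGZ, Matrix.mul_assoc _ Zᵀ,
    transpose_mul_eq_of_mul_eq hK hG hKZ hZGZ, Matrix.mul_assoc T, Matrix.mul_assoc Z,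
    nonsing_inv_mul_cancel_left _ _ ((isUnit_iff_isUnit_det T).1 hT), Matrix.mul_assoc]

end

variable [DecidableEq ι]

def deflationProjector (G : Matrix ι ι R) (Z : Matrix ι κ R) : Matrix ι ι R :=
  1 - G * Z * Zᵀ

theorem deflationProjector_transpose (hG : Gᵀ = G) (Z : Matrix ι κ R) :
    (deflationProjector G Z)ᵀ = 1 - Z * Zᵀ * G := by
  rw [deflationProjector, transpose_sub, transpose_one, transpose_mul, transpose_mul,
    transpose_transpose, hG, Matrix.mul_assoc]

variable [DecidableEq κ]

theorem deflationProjector_mul_comm (hK : Kᵀ = K) (hG : Gᵀ = G) (hKZ : K * Z = G * Z * T)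
    (hZGZ : Zᵀ * G * Z = 1) : deflationProjector G Z * K = K * (deflationProjector G Z)ᵀ := by
  have hleft : G * Z * Zᵀ * K = G * Z * (T * Zᵀ * G) := by
    rw [Matrix.mul_assoc (G * Z), transpose_mul_eq_of_mul_eq hK hG hKZ hZGZ]
  have hright : K * (Z * Zᵀ * G) = G * Z * T * Zᵀ * G := by
    rw [← Matrix.mul_assoc, ← Matrix.mul_assoc, hKZ]
  rw [deflationProjector_transpose hG, deflationProjector, sub_mul, mul_sub, one_mul, mul_one,
    hleft, hright]
  simp only [Matrix.mul_assoc]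

theorem sub_eq_deflationProjector_transpose_mulVec (hK : Kᵀ = K) (hG : Gᵀ = G)
    (hKZ : K * Z = G * Z * T) (hZGZ : Zᵀ * G * Z = 1) (hKunit : IsUnit K) (hT : IsUnit T)
    {f ustar utstar ut u : ι → R} (hustar : K *ᵥ ustar = f)
    (hutstar : (deflationProjector G Z * K) *ᵥ utstar = deflationProjector G Z *ᵥ f)
    (hu : u = Z *ᵥ ((Zᵀ * K * Z)⁻¹ *ᵥ (Zᵀ *ᵥ f)) + (deflationProjector G Z)ᵀ *ᵥ ut) :
    ustar - u = (deflationProjector G Z)ᵀ *ᵥ (utstar - ut) := by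
  have hproj : (deflationProjector G Z)ᵀ *ᵥ utstar = (deflationProjector G Z)ᵀ *ᵥ ustar := by
    refine mulVec_injective_of_isUnit hKunit ?_
    rw [mulVec_mulVec, mulVec_mulVec, ← deflationProjector_mul_comm hK hG hKZ hZGZ, hutstar,
      ← hustar, mulVec_mulVec]
  have hcoarse : Z *ᵥ ((Zᵀ * K * Z)⁻¹ *ᵥ (Zᵀ *ᵥ f)) =
      ustar - (deflationProjector G Z)ᵀ *ᵥ ustar := by
    rw [← hustar, mulVec_mulVec, mulVec_mulVec, mulVec_mulVec,
      mul_inv_mul_transpose_mul_eq hK hG hKZ hZGZ hT, deflationProjector_transpose hG,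
      sub_mulVec, one_mulVec, sub_sub_cancel]
  rw [hu, hcoarse, mulVec_sub, hproj]
  abel

end Deflation

section BlockDiagonal

variable {R m n k : Type*} [CommRing R] {M : Matrix m m R} {N : Matrix n n R} {A : Matrix m n R}
  {U : Matrix m k R} {V : Matrix n k R} {S : Matrix k k R}

theorem fromBlocks_transpose_neg_transpose (hM : Mᵀ = M) (hN : Nᵀ = N) :
    (fromBlocks M A Aᵀ (-N))ᵀ = fromBlocks M A Aᵀ (-N) := by
  rw [fromBlocks_transpose, transpose_transpose, transpose_neg, hM, hN]

variable [Fintype m] [Fintype n]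

theorem fromBlocks_transpose_mul_mul_eq_one [DecidableEq k] (hU : Uᵀ * M * U = 1)
    (hV : Vᵀ * N * V = 1) :
    (fromBlocks U 0 0 V)ᵀ * fromBlocks M 0 0 N * fromBlocks U 0 0 V = 1 := by
  simp [fromBlocks_transpose, fromBlocks_multiply, hU, hV]

variable [Fintype k]

theorem deflationProjector_fromBlocks [DecidableEq m] [DecidableEq n] (hN : Nᵀ = N) :
    deflationProjector (fromBlocks M 0 0 N) (fromBlocks U 0 0 V) =
      fromBlocks (1 - M * U * Uᵀ) 0 0 (1 - V * Vᵀ * N)ᵀ := by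
  simp [deflationProjector, fromBlocks_transpose, fromBlocks_multiply, ← fromBlocks_one,
    sub_eq_add_neg, fromBlocks_add, fromBlocks_neg, transpose_mul, hN, Matrix.mul_assoc]

variable [DecidableEq k]

theorem fromBlocks_transpose_neg_mul_eq (hAV : A * V = M * U * S) (hAU : Aᵀ * U = N * V * S) :
    fromBlocks M A Aᵀ (-N) * fromBlocks U 0 0 V =
      fromBlocks M 0 0 N * fromBlocks U 0 0 V * fromBlocks 1 S S (-1) := by
  simp [fromBlocks_multiply, hAV, hAU]

theorem transpose_eq_of_mul_eq (hU : Uᵀ * M * U = 1) (hV : Vᵀ * N * V = 1)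
    (hAV : A * V = M * U * S) (hAU : Aᵀ * U = N * V * S) : Sᵀ = S := by
  calc Sᵀ = (Uᵀ * A * V)ᵀ := by
        rw [Matrix.mul_assoc, hAV, ← Matrix.mul_assoc, ← Matrix.mul_assoc, hU, one_mul]
    _ = Vᵀ * Aᵀ * U := by rw [transpose_mul, transpose_mul, transpose_transpose, Matrix.mul_assoc]
    _ = S := by rw [Matrix.mul_assoc, hAU, ← Matrix.mul_assoc, ← Matrix.mul_assoc, hV, one_mul]

end BlockDiagonal

end Matrix

theorem deflated_error_relation_general (m n k : ℕ)
    (M : Matrix (Fin m) (Fin m) ℝ) (N : Matrix (Fin n) (Fin n) ℝ)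
    (A : Matrix (Fin m) (Fin n) ℝ)
    (hM : M.PosDef) (hN : N.PosDef)
    (Uk : Matrix (Fin m) (Fin k) ℝ) (Vk : Matrix (Fin n) (Fin k) ℝ)
    (Sig : Matrix (Fin k) (Fin k) ℝ)
    (hUk : Ukᵀ * M * Uk = 1) (hVk : Vkᵀ * N * Vk = 1)
    (hAV : A * Vk = M * Uk * Sig) (hAU : Aᵀ * Uk = N * Vk * Sig)
    (P : Matrix (Fin m) (Fin m) ℝ) (hP : P = 1 - M * Uk * Ukᵀ)
    (Q : Matrix (Fin n) (Fin n) ℝ) (hQ : Q = 1 - Vk * Vkᵀ * N)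
    (K : Matrix (Fin m ⊕ Fin n) (Fin m ⊕ Fin n) ℝ)
    (hK : K = Matrix.fromBlocks M A Aᵀ (-N))
    (Pcal : Matrix (Fin m ⊕ Fin n) (Fin m ⊕ Fin n) ℝ)
    (hPcal : Pcal = Matrix.fromBlocks P 0 0 Qᵀ)
    (Z : Matrix (Fin m ⊕ Fin n) (Fin k ⊕ Fin k) ℝ)
    (hZ : Z = Matrix.fromBlocks Uk 0 0 Vk)
    (f ustar utstar ut u : Fin m ⊕ Fin n → ℝ)
    (hustar : K.mulVec ustar = f)
    (hutstar : (Pcal * K).mulVec utstar = Pcal.mulVec f)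
    (hu : u = Z.mulVec (((Zᵀ * K * Z)⁻¹).mulVec (Zᵀ.mulVec f)) + Pcalᵀ.mulVec ut) :
    ustar - u = Pcalᵀ.mulVec (utstar - ut) := by
  have hMs : Mᵀ = M := (conjTranspose_eq_transpose_of_trivial M).symm.trans hM.isHermitian.eq
  have hNs : Nᵀ = N := (conjTranspose_eq_transpose_of_trivial N).symm.trans hN.isHermitian.eq
  have hT : IsUnit (fromBlocks 1 Sig Sig (-1) : Matrix (Fin k ⊕ Fin k) (Fin k ⊕ Fin k) ℝ) := by
    have := isUnit_fromBlocks_transpose_neg PosDef.one PosDef.one Sig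
    rwa [transpose_eq_of_mul_eq hUk hVk hAV hAU] at this
  have hG : (fromBlocks M 0 0 N)ᵀ = fromBlocks M 0 0 N := by
    simp only [fromBlocks_transpose, transpose_zero, hMs, hNs]
  subst hK hZ hPcal hP hQ
  rw [← deflationProjector_fromBlocks hNs] at hutstar hu ⊢
  exact sub_eq_deflationProjector_transpose_mulVec (fromBlocks_transpose_neg_transpose hMs hNs)
    hG (fromBlocks_transpose_neg_mul_eq hAV hAU) (fromBlocks_transpose_mul_mul_eq_one hUk hVk)
    (isUnit_fromBlocks_transpose_neg hM hN A) hT hustar hutstar hu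

/-- If `u⋆` solves `K u⋆ = f`, `ũ⋆` solves `Pcal K ũ⋆ = Pcal f`, and
`u = Z_k (Z_kᵀ K Z_k)⁻¹ Z_kᵀ f + Pcalᵀ ũ`, then `u⋆ − u = Pcalᵀ (ũ⋆ − ũ)`. -/
theorem deflated_error_relation (m n k : ℕ)
    (M : Matrix (Fin m) (Fin m) ℝ) (N : Matrix (Fin n) (Fin n) ℝ)
    (A : Matrix (Fin m) (Fin n) ℝ)
    (hM : M.PosDef) (hN : N.PosDef)
    (Uk : Matrix (Fin m) (Fin k) ℝ) (Vk : Matrix (Fin n) (Fin k) ℝ)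
    (Sig : Matrix (Fin k) (Fin k) ℝ)
    (hSigDiag : ∀ i j, i ≠ j → Sig i j = 0) (hSigNonneg : ∀ i, 0 ≤ Sig i i)
    (hUk : Ukᵀ * M * Uk = 1) (hVk : Vkᵀ * N * Vk = 1)
    (hAV : A * Vk = M * Uk * Sig) (hAU : Aᵀ * Uk = N * Vk * Sig)
    (P : Matrix (Fin m) (Fin m) ℝ) (hP : P = 1 - M * Uk * Ukᵀ)
    (Q : Matrix (Fin n) (Fin n) ℝ) (hQ : Q = 1 - Vk * Vkᵀ * N)
    (K : Matrix (Fin m ⊕ Fin n) (Fin m ⊕ Fin n) ℝ)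
    (hK : K = Matrix.fromBlocks M A Aᵀ (-N))
    (Pcal : Matrix (Fin m ⊕ Fin n) (Fin m ⊕ Fin n) ℝ)
    (hPcal : Pcal = Matrix.fromBlocks P 0 0 Qᵀ)
    (Z : Matrix (Fin m ⊕ Fin n) (Fin k ⊕ Fin k) ℝ)
    (hZ : Z = Matrix.fromBlocks Uk 0 0 Vk)
    (f ustar utstar ut u : Fin m ⊕ Fin n → ℝ)
    (hustar : K.mulVec ustar = f)
    (hutstar : (Pcal * K).mulVec utstar = Pcal.mulVec f)
    (hu : u = Z.mulVec (((Zᵀ * K * Z)⁻¹).mulVec (Zᵀ.mulVec f)) + Pcalᵀ.mulVec ut) :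
    ustar - u = Pcalᵀ.mulVec (utstar - ut) :=
  deflated_error_relation_general m n k M N A hM hN Uk Vk Sig hUk hVk hAV hAU P hP Q hQ K hK Pcal
    hPcal Z hZ f ustar utstar ut u hustar hutstar hu
end

section
/- For any m×n real matrix A and symmetric positive definite matrices M (m×m) and N (n×n), there exist an m×m matrix Ũ with Ũᵀ M Ũ = I_m, an n×n matrix Ṽ with Ṽᵀ N Ṽ = I_n, and an m×n matrix Σ with Σ_{ij} = 0 for i ≠ j and Σ_{ii} ≥ 0, such that A = M Ũ Σ Ṽᵀ N (existence of the elliptic singular value decomposition). -/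
/-!
Write `M = L Lᵀ` and `N = K Kᵀ` with `L`, `K` invertible. If `L⁻¹ A K⁻ᵀ = U Σ Vᵀ` is an ordinary
singular value decomposition, then `Ũ = L⁻ᵀ U` and `Ṽ = K⁻ᵀ V` work.

The ordinary SVD of `T` comes from an orthonormal eigenbasis `v` of `T* T`. Listing its
eigenvalues in decreasing order puts the nonzero singular values `σ j` first; the vectors
`T v j / σ j` are then orthonormal and extend to an orthonormal basis `u` with `T v j = σ j • u j`,
while `T v j = 0` for the remaining `j`.
-/

open Matrix Module

namespace LinearMap

variable {𝕜 E F : Type*} [RCLike 𝕜]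
  [NormedAddCommGroup E] [InnerProductSpace 𝕜 E] [FiniteDimensional 𝕜 E]
  [NormedAddCommGroup F] [InnerProductSpace 𝕜 F] [FiniteDimensional 𝕜 F]
  (T : E →ₗ[𝕜] F) {n : ℕ}

local notation "⟪" x ", " y "⟫" => inner 𝕜 x y

theorem inner_apply_eigenvectorBasis_adjoint_comp_self (hn : finrank 𝕜 E = n) (j k : Fin n) :
    ⟪T (T.isSymmetric_adjoint_comp_self.eigenvectorBasis hn j),
      T (T.isSymmetric_adjoint_comp_self.eigenvectorBasis hn k)⟫ =
      if j = k then (T.singularValues j ^ 2 : ℝ) else 0 := by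
  rw [← adjoint_inner_right, ← comp_apply, T.isSymmetric_adjoint_comp_self.apply_eigenvectorBasis,
    inner_smul_right, orthonormal_iff_ite.mp (OrthonormalBasis.orthonormal _),
    T.sq_singularValues_fin hn]
  split_ifs with h <;> simp [h]

theorem exists_orthonormalBasis_inner_apply_eq_singularValues (hn : finrank 𝕜 E = n) {m : ℕ}
    (hm : finrank 𝕜 F = m) :
    ∃ (v : OrthonormalBasis (Fin n) 𝕜 E) (u : OrthonormalBasis (Fin m) 𝕜 F),
      ∀ i j, ⟪u i, T (v j)⟫ = if (i : ℕ) = j then (T.singularValues j : 𝕜) else 0 := by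
  set v := T.isSymmetric_adjoint_comp_self.eigenvectorBasis hn
  set r := finrank 𝕜 T.range
  have hσ (k : ℕ) : T.singularValues k ≠ 0 ↔ k < r :=
    (T.singularValues_pos_iff_ne_zero k).symm.trans T.singularValues_pos_iff_lt_finrank_range
  have hrn : r ≤ n := hn ▸ T.finrank_range_le
  have hrm : r ≤ m := hm ▸ Submodule.finrank_le _
  have hTv (j : Fin n) (hj : ¬ (j : ℕ) < r) : T (v j) = 0 := by
    rw [← inner_self_eq_zero (𝕜 := 𝕜), T.inner_apply_eigenvectorBasis_adjoint_comp_self hn,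
      if_pos rfl, not_not.mp ((hσ j).not.mpr hj)]
    simp
  let f : Fin m → F := fun i =>
    if h : (i : ℕ) < n then (T.singularValues i : 𝕜)⁻¹ • T (v ⟨i, h⟩) else 0
  have hf : Orthonormal 𝕜 ({i : Fin m | (i : ℕ) < r}.domRestrict f) := by
    rw [orthonormal_iff_ite]
    rintro ⟨i, hi⟩ ⟨i', hi'⟩
    simp only [Set.domRestrict_apply, f, dif_pos (hi.trans_le hrn), dif_pos (hi'.trans_le hrn),
      inner_smul_left, inner_smul_right]
    rw [T.inner_apply_eigenvectorBasis_adjoint_comp_self hn]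
    by_cases h : i = i'
    · subst h
      have hσi : (T.singularValues i : 𝕜) ≠ 0 := by exact_mod_cast (hσ i).mpr hi
      simp only [map_inv₀, RCLike.conj_ofReal, ↓reduceIte, map_pow]
      field_simp
    · simp [h, Fin.ext_iff, Fin.val_injective.ne h]
  obtain ⟨u, hu⟩ := hf.exists_orthonormalBasis_extension_of_card_eq (by simp [hm])
  refine ⟨v, u, fun i j => ?_⟩
  by_cases hj : (j : ℕ) < r
  · have hvj : T (v j) = (T.singularValues j : 𝕜) • u ⟨j, hj.trans_le hrm⟩ := by
      rw [hu _ hj]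
      simp only [f, dif_pos j.2, smul_smul]
      rw [mul_inv_cancel₀ (by exact_mod_cast (hσ j).mpr hj), one_smul]
    rw [hvj, inner_smul_right, orthonormal_iff_ite.mp u.orthonormal]
    simp [Fin.ext_iff]
  · rw [hTv j hj, inner_zero_right, not_not.mp ((hσ j).not.mpr hj)]
    simp

end LinearMap

namespace Matrix

def rectDiagonal {R : Type*} [Zero R] (m n : ℕ) (d : ℕ → R) : Matrix (Fin m) (Fin n) R :=
  of fun i j => if (i : ℕ) = j then d j else 0

variable {𝕜 : Type*} [RCLike 𝕜]

theorem exists_eq_unitary_mul_rectDiagonal_mul_star {m n : ℕ} (B : Matrix (Fin m) (Fin n) 𝕜) :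
    ∃ U ∈ unitaryGroup (Fin m) 𝕜, ∃ V ∈ unitaryGroup (Fin n) 𝕜, B = U *
      rectDiagonal m n (fun k => ((toLpLin 2 2 B).singularValues k : 𝕜)) * star V := by
  obtain ⟨v, u, huv⟩ := (toLpLin 2 2 B).exists_orthonormalBasis_inner_apply_eq_singularValues
    (finrank_euclideanSpace_fin) (finrank_euclideanSpace_fin)
  set U := (EuclideanSpace.basisFun (Fin m) 𝕜).toBasis.toMatrix u
  set V := (EuclideanSpace.basisFun (Fin n) 𝕜).toBasis.toMatrix v
  have hU : U ∈ unitaryGroup (Fin m) 𝕜 :=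
    OrthonormalBasis.toMatrix_orthonormalBasis_mem_unitary _ _
  have hV : V ∈ unitaryGroup (Fin n) 𝕜 :=
    OrthonormalBasis.toMatrix_orthonormalBasis_mem_unitary _ _
  have hSig :
      star U * B * V = rectDiagonal m n (fun k => ((toLpLin 2 2 B).singularValues k : 𝕜)) := by
    ext i j
    rw [rectDiagonal, of_apply, ← huv i j]
    simp only [mul_apply, star_apply, Basis.toMatrix_apply, OrthonormalBasis.coe_toBasis_repr_apply,
      EuclideanSpace.basisFun_repr, RCLike.star_def, EuclideanSpace.inner_eq_star_dotProduct,
      dotProduct, ofLp_toLpLin, toLin'_apply, mulVec, Pi.star_apply, U, V]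
    simp only [Finset.sum_mul]
    rw [Finset.sum_comm]
    exact Finset.sum_congr rfl fun _ _ => Finset.sum_congr rfl fun _ _ => by ring
  refine ⟨U, hU, V, hV, ?_⟩
  calc B = U * star U * B * (V * star V) := by
        rw [mem_unitaryGroup_iff.mp hU, mem_unitaryGroup_iff.mp hV, Matrix.one_mul, Matrix.mul_one]
    _ = U * (star U * B * V) * star V := by simp only [Matrix.mul_assoc]
    _ = _ := by rw [hSig]

section Whitening

variable {R ι κ : Type*} [CommRing R] [StarRing R] [Fintype ι] [DecidableEq ι]
  {L : Matrix ι ι R}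

theorem mul_conjTranspose_mul_conjTranspose_inv_mul (hL : IsUnit L) (U : Matrix ι κ R) :
    L * Lᴴ * (Lᴴ⁻¹ * U) = L * U := by
  rw [Matrix.mul_assoc, mul_nonsing_inv_cancel_left _ _
    ((isUnit_iff_isUnit_det _).mp ((isUnit_conjTranspose L).mpr hL))]

theorem conjTranspose_inv_mul_conjTranspose_mul_mul_conjTranspose (hL : IsUnit L)
    (U : Matrix ι κ R) : (Lᴴ⁻¹ * U)ᴴ * (L * Lᴴ) = Uᴴ * Lᴴ := by
  calc (Lᴴ⁻¹ * U)ᴴ * (L * Lᴴ) = (L * Lᴴ * (Lᴴ⁻¹ * U))ᴴ := by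
        rw [conjTranspose_mul (L * Lᴴ), conjTranspose_mul L, conjTranspose_conjTranspose]
    _ = Uᴴ * Lᴴ := by rw [mul_conjTranspose_mul_conjTranspose_inv_mul hL, conjTranspose_mul]

theorem conjTranspose_inv_mul_conjTranspose_mul_mul_self (hL : IsUnit L) (U : Matrix ι κ R) :
    (Lᴴ⁻¹ * U)ᴴ * (L * Lᴴ) * (Lᴴ⁻¹ * U) = Uᴴ * U := by
  rw [conjTranspose_inv_mul_conjTranspose_mul_mul_conjTranspose hL, Matrix.mul_assoc,
    mul_nonsing_inv_cancel_left _ _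
      ((isUnit_iff_isUnit_det _).mp ((isUnit_conjTranspose L).mpr hL))]

end Whitening

end Matrix

/-- Existence of the elliptic singular value decomposition: for any real `m × n` matrix `A`
and symmetric positive definite `M` (`m × m`) and `N` (`n × n`), there exist `Ũ` with
`Ũᵀ M Ũ = I_m`, `Ṽ` with `Ṽᵀ N Ṽ = I_n`, and a "diagonal" `m × n` matrix `Σ` with
nonnegative diagonal entries such that `A = M Ũ Σ Ṽᵀ N`. -/
theorem esvd_exists (m n : ℕ)
    (M : Matrix (Fin m) (Fin m) ℝ) (N : Matrix (Fin n) (Fin n) ℝ)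
    (A : Matrix (Fin m) (Fin n) ℝ)
    (hM : M.PosDef) (hN : N.PosDef) :
    ∃ (Ut : Matrix (Fin m) (Fin m) ℝ) (Vt : Matrix (Fin n) (Fin n) ℝ)
      (Sig : Matrix (Fin m) (Fin n) ℝ),
      Utᵀ * M * Ut = 1 ∧ Vtᵀ * N * Vt = 1 ∧
      (∀ (i : Fin m) (j : Fin n), (i : ℕ) ≠ (j : ℕ) → Sig i j = 0) ∧
      (∀ (i : Fin m) (j : Fin n), (i : ℕ) = (j : ℕ) → 0 ≤ Sig i j) ∧
      A = M * Ut * Sig * Vtᵀ * N := by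
  open scoped MatrixOrder in
  obtain ⟨L, hL, rfl⟩ :=
    CStarAlgebra.isStrictlyPositive_iff_eq_mul_star_self.mp hM.isStrictlyPositive
  open scoped MatrixOrder in
  obtain ⟨K, hK, rfl⟩ :=
    CStarAlgebra.isStrictlyPositive_iff_eq_mul_star_self.mp hN.isStrictlyPositive
  simp only [star_eq_conjTranspose, ← conjTranspose_eq_transpose_of_trivial]
  obtain ⟨U, hU, V, hV, hB⟩ := exists_eq_unitary_mul_rectDiagonal_mul_star (L⁻¹ * A * Kᴴ⁻¹)
  generalize hSig : (rectDiagonal m n _ : Matrix (Fin m) (Fin n) ℝ) = Sig at hB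
  refine ⟨Lᴴ⁻¹ * U, Kᴴ⁻¹ * V, Sig, ?_, ?_, fun i j hij => by simp [← hSig, rectDiagonal, hij],
    fun i j hij => by simp [← hSig, rectDiagonal, hij, LinearMap.singularValues_nonneg], ?_⟩
  · rw [conjTranspose_inv_mul_conjTranspose_mul_mul_self hL, ← star_eq_conjTranspose,
      mem_unitaryGroup_iff'.mp hU]
  · rw [conjTranspose_inv_mul_conjTranspose_mul_mul_self hK, ← star_eq_conjTranspose,
      mem_unitaryGroup_iff'.mp hV]
  · rw [Matrix.mul_assoc _ _ (K * Kᴴ),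
      conjTranspose_inv_mul_conjTranspose_mul_mul_conjTranspose hK,
      mul_conjTranspose_mul_conjTranspose_inv_mul hL]
    calc A = L * (L⁻¹ * A * Kᴴ⁻¹) * Kᴴ := by
          rw [Matrix.mul_assoc L⁻¹,
            mul_nonsing_inv_cancel_left _ _ ((isUnit_iff_isUnit_det _).mp hL),
            nonsing_inv_mul_cancel_right _ _
              ((isUnit_iff_isUnit_det _).mp ((isUnit_conjTranspose K).mpr hK))]
      _ = L * U * Sig * (Vᴴ * Kᴴ) := by
          rw [hB, star_eq_conjTranspose]; simp only [Matrix.mul_assoc]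
end

section
/- The two-sided preconditioned matrix H^{−1/2} K H^{−1/2} is orthogonally similar to S = [[I_m, Σ], [Σᵀ, −I_n]]: the (m+n)×(m+n) matrix O = diag(M^{1/2} Ũ, N^{1/2} Ṽ) is orthogonal and H^{−1/2} K H^{−1/2} = O S Oᵀ. -/
/-!
Write `P = M^{1/2}` and `Q = N^{1/2}`. Since `P⁻¹ M = P = M P⁻¹`, conjugating a matrix of the form
`M X N` by `P⁻¹` and `Q⁻¹` gives `P X Q`. Every block of `K` has this form: `ŨŨᵀ = M⁻¹` gives
`M = M Ũ Ũᵀ M`, and likewise `A = M Ũ Σ Ṽᵀ N`, `Aᵀ = N Ṽ Σᵀ Ũᵀ M`, `-N = N Ṽ (-I) Ṽᵀ N`. So the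
blocks of `H^{-1/2} K H^{-1/2}` are those of `O S Oᵀ`, and `P Ũ`, `Q Ṽ` are orthogonal because
`(P Ũ)ᵀ (P Ũ) = Ũᵀ M Ũ = I`.
-/

open Matrix

namespace Matrix.PosSemidef

open scoped ComplexOrder

/-- The positive semidefinite square root of a positive semidefinite matrix
(the definition of `Matrix.PosSemidef.sqrt` in the older Mathlib, which has since been removed). -/
noncomputable def sqrt {n : Type*} {𝕜 : Type*} [Fintype n] [DecidableEq n] [RCLike 𝕜]
    {A : Matrix n n 𝕜} (hA : A.PosSemidef) : Matrix n n 𝕜 :=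
  hA.1.eigenvectorUnitary.1 * diagonal ((↑) ∘ (fun x : ℝ => √x) ∘ hA.1.eigenvalues) *
  (star hA.1.eigenvectorUnitary : Matrix n n 𝕜)

variable {ι 𝕜 : Type*} [Fintype ι] [DecidableEq ι] [RCLike 𝕜] {A : Matrix ι ι 𝕜}

theorem sqrt_mul_self (hA : A.PosSemidef) : hA.sqrt * hA.sqrt = A := by
  set U : Matrix ι ι 𝕜 := (hA.1.eigenvectorUnitary : Matrix ι ι 𝕜)
  set D : Matrix ι ι 𝕜 := diagonal ((↑) ∘ (fun x : ℝ => √x) ∘ hA.1.eigenvalues)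
  have hD : D * D = diagonal (RCLike.ofReal ∘ hA.1.eigenvalues) := by
    rw [diagonal_mul_diagonal]
    congr 1; funext i
    simp only [Function.comp_apply]
    rw [← RCLike.ofReal_mul, Real.mul_self_sqrt (hA.eigenvalues_nonneg i)]
  calc hA.sqrt * hA.sqrt = U * (D * (star U * U) * D) * star U := by
        simp only [sqrt, Matrix.mul_assoc]; rfl
    _ = A := by
        rw [Unitary.coe_star_mul_self, Matrix.mul_one, hD]
        exact hA.1.spectral_theorem.symm

theorem isHermitian_sqrt (hA : A.PosSemidef) : hA.sqrt.IsHermitian :=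
  isHermitian_mul_mul_conjTranspose _ <| isHermitian_diagonal_iff.2 fun _ => RCLike.conj_ofReal _

end Matrix.PosSemidef

namespace Matrix.PosDef

open scoped ComplexOrder

variable {ι κ 𝕜 : Type*} [Fintype ι] [DecidableEq ι] [Fintype κ] [DecidableEq κ] [RCLike 𝕜]
  {A : Matrix ι ι 𝕜} {B : Matrix κ κ 𝕜}

theorem isUnit_det_sqrt (hA : A.PosDef) : IsUnit hA.posSemidef.sqrt.det :=
  (isUnit_iff_isUnit_det _).1 <|
    isUnit_of_mul_isUnit_left (hA.posSemidef.sqrt_mul_self ▸ hA.isUnit)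

theorem inv_sqrt_mul_self (hA : A.PosDef) : hA.posSemidef.sqrt⁻¹ * A = hA.posSemidef.sqrt :=
  calc hA.posSemidef.sqrt⁻¹ * A
      = hA.posSemidef.sqrt⁻¹ * (hA.posSemidef.sqrt * hA.posSemidef.sqrt) :=
        congrArg _ hA.posSemidef.sqrt_mul_self.symm
    _ = hA.posSemidef.sqrt := nonsing_inv_mul_cancel_left _ _ hA.isUnit_det_sqrt

theorem mul_inv_sqrt_self (hA : A.PosDef) : A * hA.posSemidef.sqrt⁻¹ = hA.posSemidef.sqrt :=
  calc A * hA.posSemidef.sqrt⁻¹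
      = hA.posSemidef.sqrt * hA.posSemidef.sqrt * hA.posSemidef.sqrt⁻¹ :=
        congrArg (· * _) hA.posSemidef.sqrt_mul_self.symm
    _ = hA.posSemidef.sqrt := mul_nonsing_inv_cancel_right _ _ hA.isUnit_det_sqrt

theorem inv_sqrt_mul_mul_mul_inv_sqrt (hA : A.PosDef) (hB : B.PosDef) (X : Matrix ι κ 𝕜) :
    hA.posSemidef.sqrt⁻¹ * (A * X * B) * hB.posSemidef.sqrt⁻¹ =
      hA.posSemidef.sqrt * X * hB.posSemidef.sqrt :=
  calc hA.posSemidef.sqrt⁻¹ * (A * X * B) * hB.posSemidef.sqrt⁻¹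
      = hA.posSemidef.sqrt⁻¹ * A * X * (B * hB.posSemidef.sqrt⁻¹) := by
        simp only [Matrix.mul_assoc]
    _ = hA.posSemidef.sqrt * X * hB.posSemidef.sqrt := by
        rw [hA.inv_sqrt_mul_self, hB.mul_inv_sqrt_self]

end Matrix.PosDef

namespace Matrix

section Blocks

variable {l m α : Type*} [Fintype l] [Fintype m] [Semiring α]

theorem fromBlocks_diag_mul_fromBlocks_mul_fromBlocks_diag (P P' : Matrix l l α)
    (Q Q' : Matrix m m α) (A : Matrix l l α) (B : Matrix l m α) (C : Matrix m l α)
    (D : Matrix m m α) :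
    fromBlocks P 0 0 Q * fromBlocks A B C D * fromBlocks P' 0 0 Q' =
      fromBlocks (P * A * P') (P * B * Q') (Q * C * P') (Q * D * Q') := by
  simp only [fromBlocks_multiply, Matrix.mul_zero, Matrix.zero_mul, add_zero, zero_add]

theorem fromBlocks_diag_transpose_mul_self [DecidableEq l] [DecidableEq m]
    {P : Matrix l l α} {Q : Matrix m m α} (hP : Pᵀ * P = 1) (hQ : Qᵀ * Q = 1) :
    (fromBlocks P 0 0 Q)ᵀ * fromBlocks P 0 0 Q = 1 := by
  simp [fromBlocks_transpose, fromBlocks_multiply, hP, hQ]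

end Blocks

theorem mul_mul_transpose_mul_eq_self {ι R : Type*} [Fintype ι] [DecidableEq ι] [CommRing R]
    {A U : Matrix ι ι R} (hU : Uᵀ * A * U = 1) : A * U * Uᵀ * A = A := by
  have hAUU : A * U * Uᵀ = 1 := mul_eq_one_comm.mp (by rwa [← Matrix.mul_assoc])
  rw [hAUU, Matrix.one_mul]

variable {ι κ : Type*} [Fintype ι] [DecidableEq ι] [Fintype κ] [DecidableEq κ]
  {A U : Matrix ι ι ℝ} {B V : Matrix κ κ ℝ}

theorem PosSemidef.transpose_sqrt (hA : A.PosSemidef) : hA.sqrtᵀ = hA.sqrt :=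
  (isHermitian_iff_isSymm.1 hA.isHermitian_sqrt).eq

theorem PosDef.transpose_mul_self_sqrt_mul (hA : A.PosDef) (hU : Uᵀ * A * U = 1) :
    (hA.posSemidef.sqrt * U)ᵀ * (hA.posSemidef.sqrt * U) = 1 := by
  rw [transpose_mul, hA.posSemidef.transpose_sqrt, Matrix.mul_assoc, ← Matrix.mul_assoc _ _ U,
    hA.posSemidef.sqrt_mul_self, ← Matrix.mul_assoc, hU]

theorem PosDef.inv_sqrt_mul_mul_inv_sqrt_of_eq (hA : A.PosDef) (hB : B.PosDef)
    {C Y : Matrix ι κ ℝ} (hC : C = A * U * Y * Vᵀ * B) :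
    hA.posSemidef.sqrt⁻¹ * C * hB.posSemidef.sqrt⁻¹ =
      hA.posSemidef.sqrt * U * Y * (hB.posSemidef.sqrt * V)ᵀ := by
  rw [hC, show A * U * Y * Vᵀ * B = A * (U * Y * Vᵀ) * B by simp only [Matrix.mul_assoc],
    hA.inv_sqrt_mul_mul_mul_inv_sqrt hB, transpose_mul, hB.posSemidef.transpose_sqrt]
  simp only [Matrix.mul_assoc]

end Matrix

theorem preconditioned_K_orthogonally_similar_general (m n : ℕ)
    (M : Matrix (Fin m) (Fin m) ℝ) (N : Matrix (Fin n) (Fin n) ℝ)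
    (A : Matrix (Fin m) (Fin n) ℝ)
    (hM : M.PosDef) (hN : N.PosDef)
    (Ut : Matrix (Fin m) (Fin m) ℝ) (Vt : Matrix (Fin n) (Fin n) ℝ)
    (Sig : Matrix (Fin m) (Fin n) ℝ)
    (hUt : Utᵀ * M * Ut = 1) (hVt : Vtᵀ * N * Vt = 1)
    (hA : A = M * Ut * Sig * Vtᵀ * N)
    (K : Matrix (Fin m ⊕ Fin n) (Fin m ⊕ Fin n) ℝ)
    (hK : K = Matrix.fromBlocks M A Aᵀ (-N))
    (Hinvhalf : Matrix (Fin m ⊕ Fin n) (Fin m ⊕ Fin n) ℝ)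
    (hHinvhalf : Hinvhalf =
      Matrix.fromBlocks (hM.posSemidef.sqrt)⁻¹ 0 0 (hN.posSemidef.sqrt)⁻¹)
    (O : Matrix (Fin m ⊕ Fin n) (Fin m ⊕ Fin n) ℝ)
    (hO : O = Matrix.fromBlocks (hM.posSemidef.sqrt * Ut) 0 0 (hN.posSemidef.sqrt * Vt))
    (S : Matrix (Fin m ⊕ Fin n) (Fin m ⊕ Fin n) ℝ)
    (hS : S = Matrix.fromBlocks 1 Sig Sigᵀ (-1)) :
    Oᵀ * O = 1 ∧ O * Oᵀ = 1 ∧ Hinvhalf * K * Hinvhalf = O * S * Oᵀ := by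
  have hOO : Oᵀ * O = 1 := hO ▸ fromBlocks_diag_transpose_mul_self
    (hM.transpose_mul_self_sqrt_mul hUt) (hN.transpose_mul_self_sqrt_mul hVt)
  refine ⟨hOO, mul_eq_one_comm.mp hOO, ?_⟩
  have hMt : Mᵀ = M := (isHermitian_iff_isSymm.1 hM.isHermitian).eq
  have hNt : Nᵀ = N := (isHermitian_iff_isSymm.1 hN.isHermitian).eq
  rw [hHinvhalf, hK, hS, hO, fromBlocks_transpose]
  simp only [transpose_zero, fromBlocks_diag_mul_fromBlocks_mul_fromBlocks_diag]
  congr 1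
  · exact hM.inv_sqrt_mul_mul_inv_sqrt_of_eq hM
      (by rw [Matrix.mul_one, mul_mul_transpose_mul_eq_self hUt])
  · exact hM.inv_sqrt_mul_mul_inv_sqrt_of_eq hN hA
  · exact hN.inv_sqrt_mul_mul_inv_sqrt_of_eq hM
      (by simp only [hA, transpose_mul, transpose_transpose, hMt, hNt, Matrix.mul_assoc])
  · exact hN.inv_sqrt_mul_mul_inv_sqrt_of_eq hN
      (by rw [Matrix.mul_neg, Matrix.mul_one, Matrix.neg_mul, Matrix.neg_mul,
        mul_mul_transpose_mul_eq_self hVt])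

/-- The two-sided preconditioned matrix `H^{−1/2} K H^{−1/2}` is orthogonally similar to
`S = [[I, Σ], [Σᵀ, −I]]`: the matrix `O = diag(M^{1/2} Ũ, N^{1/2} Ṽ)` is orthogonal and
`H^{−1/2} K H^{−1/2} = O S Oᵀ`. -/
theorem preconditioned_K_orthogonally_similar (m n : ℕ)
    (M : Matrix (Fin m) (Fin m) ℝ) (N : Matrix (Fin n) (Fin n) ℝ)
    (A : Matrix (Fin m) (Fin n) ℝ)
    (hM : M.PosDef) (hN : N.PosDef)
    (Ut : Matrix (Fin m) (Fin m) ℝ) (Vt : Matrix (Fin n) (Fin n) ℝ)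
    (Sig : Matrix (Fin m) (Fin n) ℝ)
    (hUt : Utᵀ * M * Ut = 1) (hVt : Vtᵀ * N * Vt = 1)
    (hSigDiag : ∀ (i : Fin m) (j : Fin n), (i : ℕ) ≠ (j : ℕ) → Sig i j = 0)
    (hSigNonneg : ∀ (i : Fin m) (j : Fin n), (i : ℕ) = (j : ℕ) → 0 ≤ Sig i j)
    (hA : A = M * Ut * Sig * Vtᵀ * N)
    (K : Matrix (Fin m ⊕ Fin n) (Fin m ⊕ Fin n) ℝ)
    (hK : K = Matrix.fromBlocks M A Aᵀ (-N))
    (Hinvhalf : Matrix (Fin m ⊕ Fin n) (Fin m ⊕ Fin n) ℝ)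
    (hHinvhalf : Hinvhalf =
      Matrix.fromBlocks (hM.posSemidef.sqrt)⁻¹ 0 0 (hN.posSemidef.sqrt)⁻¹)
    (O : Matrix (Fin m ⊕ Fin n) (Fin m ⊕ Fin n) ℝ)
    (hO : O = Matrix.fromBlocks (hM.posSemidef.sqrt * Ut) 0 0 (hN.posSemidef.sqrt * Vt))
    (S : Matrix (Fin m ⊕ Fin n) (Fin m ⊕ Fin n) ℝ)
    (hS : S = Matrix.fromBlocks 1 Sig Sigᵀ (-1)) :
    Oᵀ * O = 1 ∧ O * Oᵀ = 1 ∧ Hinvhalf * K * Hinvhalf = O * S * Oᵀ :=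
  preconditioned_K_orthogonally_similar_general m n M N A hM hN Ut Vt Sig hUt hVt hA K hK Hinvhalf
    hHinvhalf O hO S hS
end

section
/- Let d = min(m, n). The characteristic polynomial of S = [[I_m, Σ], [Σᵀ, −I_n]] is (X − 1)^{m−d} (X + 1)^{n−d} ∏_{i=1}^{d} (X² − (σ_i² + 1)); in particular the eigenvalues of S are ±√(σ_i² + 1) for i = 1, …, d, together with 1 with multiplicity m − d and −1 with multiplicity n − d. -/
/-!
Right-multiplying `charmatrix S = [[(X - 1)•1, -Σ], [-Σᵀ, (X + 1)•1]]` by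
`[[(X + 1)•1, 0], [Σᵀ, 1]]` makes it block upper triangular, with diagonal blocks
`(X² - 1)•1 - ΣΣᵀ` and `(X + 1)•1`. Hence `χ_S · (X + 1)^m = (X + 1)^n · χ_{ΣΣᵀ + 1}(X²)` for
every `Σ`. For a rectangular diagonal `Σ` the matrix `ΣΣᵀ + 1` is diagonal with entries
`σ_i² + 1` for `i < d` and `1` for the remaining `m - d` rows, each of which contributes a factor
`X² - 1 = (X - 1)(X + 1)`; cancelling `(X + 1)^m` in the domain `ℝ[X]` gives the formula.
-/

open Matrix Polynomial

namespace Matrix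

section BlockCharpoly

variable {m n R : Type*} [Fintype m] [Fintype n] [DecidableEq m] [DecidableEq n] [CommRing R]

theorem det_fromBlocks_smul_one₂₂_mul_pow (A : Matrix m m R) (B : Matrix m n R)
    (C : Matrix n m R) (b : R) :
    (fromBlocks A B C (b • 1)).det * b ^ Fintype.card m =
      b ^ Fintype.card n * (b • A - B * C).det := by
  have h : fromBlocks A B C (b • 1) * fromBlocks (b • 1) 0 (-C) 1 =
      fromBlocks (b • A - B * C) B 0 (b • 1) := by
    simp [fromBlocks_multiply, sub_eq_add_neg]
  have := congrArg det h
  rw [det_mul, det_fromBlocks_zero₁₂, det_fromBlocks_zero₂₁, det_smul, det_smul, det_one,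
    det_one] at this
  linear_combination this

theorem charpoly_comp_X_pow_two (M : Matrix m m R) :
    M.charpoly.comp (X ^ 2) = ((X ^ 2 : R[X]) • (1 : Matrix m m R[X]) - M.map C).det := by
  rw [charpoly, ← coe_compRingHom_apply, RingHom.map_det]
  congr 1
  ext i j
  rcases eq_or_ne i j with rfl | hij <;> simp [*]

theorem charpoly_fromBlocks_one_neg_one_mul_pow (B : Matrix m n R) (C : Matrix n m R) :
    (fromBlocks 1 B C (-1)).charpoly * (X + 1) ^ Fintype.card m =
      (X + 1) ^ Fintype.card n * (B * C + 1).charpoly.comp (X ^ 2) := by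
  have charmatrix_neg_one : charmatrix (-1 : Matrix n n R) = (X + 1 : R[X]) • 1 := by
    rw [← diagonal_one, diagonal_neg, charmatrix_diagonal, smul_one_eq_diagonal]
    simp
  rw [charpoly, charmatrix_fromBlocks, charmatrix_neg_one, det_fromBlocks_smul_one₂₂_mul_pow,
    charpoly_comp_X_pow_two, charmatrix_one, ← smul_one_eq_diagonal, smul_smul,
    Matrix.neg_mul, Matrix.mul_neg, neg_neg]
  congr 2
  rw [Matrix.map_add _ (map_add _), Matrix.map_mul, Matrix.map_one _ (map_zero _) (map_one _)]
  module

end BlockCharpoly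

section RectangularDiagonal

variable {R : Type*} [CommSemiring R] {m n : ℕ} {Sig : Matrix (Fin m) (Fin n) R}

theorem mul_transpose_eq_diagonal (hSig : ∀ (i : Fin m) (j : Fin n), (i : ℕ) ≠ j → Sig i j = 0) :
    Sig * Sigᵀ = diagonal fun i => ∑ j, Sig i j ^ 2 := by
  ext i i'
  rcases eq_or_ne i i' with rfl | hii'
  · simp [mul_apply, sq]
  · rw [mul_apply, diagonal_apply_ne _ hii']
    refine Finset.sum_eq_zero fun j _ => ?_
    rcases eq_or_ne (i : ℕ) j with hij | hij
    · rw [transpose_apply, hSig i' j (by omega), mul_zero]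
    · rw [hSig i j hij, zero_mul]

theorem sum_sq_row_castLE (hSig : ∀ (i : Fin m) (j : Fin n), (i : ℕ) ≠ j → Sig i j = 0) {d : ℕ}
    (hm : d ≤ m) (hn : d ≤ n) (i : Fin d) :
    ∑ j, Sig (Fin.castLE hm i) j ^ 2 = Sig (Fin.castLE hm i) (Fin.castLE hn i) ^ 2 := by
  refine Finset.sum_eq_single _ (fun j _ hj => ?_) (by simp)
  rw [hSig _ _ fun h => hj (Fin.ext h.symm), zero_pow two_ne_zero]

theorem sum_sq_row_eq_zero (hSig : ∀ (i : Fin m) (j : Fin n), (i : ℕ) ≠ j → Sig i j = 0)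
    {i : Fin m} (hi : n ≤ i) : ∑ j, Sig i j ^ 2 = 0 :=
  Finset.sum_eq_zero fun j _ => by rw [hSig i j (by omega), zero_pow two_ne_zero]

end RectangularDiagonal

end Matrix

theorem Fin.prod_univ_eq_prod_castLE_mul_pow {M : Type*} [CommMonoid M] {d m : ℕ} (h : d ≤ m)
    (f : Fin m → M) (c : M) (hf : ∀ i : Fin m, d ≤ i → f i = c) :
    ∏ i, f i = (∏ i : Fin d, f (Fin.castLE h i)) * c ^ (m - d) := by
  obtain ⟨k, rfl⟩ := Nat.exists_eq_add_of_le h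
  rw [Fin.prod_univ_add, Nat.add_sub_cancel_left]
  congr 1
  rw [Finset.prod_congr rfl fun i _ => hf _ (by simp), Finset.prod_const, Finset.card_fin]

theorem charpoly_S_block_general (m n : ℕ)
    (Sig : Matrix (Fin m) (Fin n) ℝ)
    (hSigDiag : ∀ (i : Fin m) (j : Fin n), (i : ℕ) ≠ (j : ℕ) → Sig i j = 0)
    (S : Matrix (Fin m ⊕ Fin n) (Fin m ⊕ Fin n) ℝ)
    (hS : S = Matrix.fromBlocks 1 Sig Sigᵀ (-1)) :
    S.charpoly =
      (X - 1) ^ (m - min m n) * (X + 1) ^ (n - min m n) *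
        ∏ i : Fin (min m n),
          (X ^ 2 - C ((Sig (Fin.castLE (min_le_left m n) i)
              (Fin.castLE (min_le_right m n) i)) ^ 2 + 1)) := by
  subst hS
  have hX : (X + 1 : ℝ[X]) ≠ 0 := by simpa using X_add_C_ne_zero (1 : ℝ)
  have hdiag : Sig * Sigᵀ + 1 = diagonal fun i => ∑ j, Sig i j ^ 2 + 1 := by
    rw [mul_transpose_eq_diagonal hSigDiag, ← diagonal_one, diagonal_add]
  have hcharpoly := charpoly_fromBlocks_one_neg_one_mul_pow Sig Sigᵀ
  rw [hdiag, charpoly_diagonal, prod_comp, Fintype.card_fin, Fintype.card_fin] at hcharpoly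
  simp only [sub_comp, X_comp, C_comp] at hcharpoly
  rw [Fin.prod_univ_eq_prod_castLE_mul_pow (min_le_left m n) _ ((X - 1) * (X + 1))
    fun i hi => by rw [sum_sq_row_eq_zero hSigDiag (by omega), zero_add, map_one]; ring]
    at hcharpoly
  simp only [sum_sq_row_castLE hSigDiag (min_le_left m n) (min_le_right m n)] at hcharpoly
  generalize (∏ i : Fin (min m n), _ : ℝ[X]) = P at hcharpoly ⊢
  have hpow : (X + 1 : ℝ[X]) ^ n * (X + 1) ^ (m - min m n) =
      (X + 1) ^ (n - min m n) * (X + 1) ^ m := by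
    rw [← pow_add, ← pow_add]
    congr 1
    omega
  apply mul_right_cancel₀ (pow_ne_zero m hX)
  rw [hcharpoly, mul_pow]
  linear_combination (X - 1) ^ (m - min m n) * P * hpow

/-- The characteristic polynomial of `S = [[I_m, Σ], [Σᵀ, −I_n]]` is
`(X − 1)^{m−d} (X + 1)^{n−d} ∏_{i=1}^{d} (X² − (σ_i² + 1))` with `d = min m n`;
in particular the eigenvalues of `S` are `±√(σ_i² + 1)` for `i = 1, …, d`, together with
`1` with multiplicity `m − d` and `−1` with multiplicity `n − d`. -/
theorem charpoly_S_block (m n : ℕ)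
    (Sig : Matrix (Fin m) (Fin n) ℝ)
    (hSigDiag : ∀ (i : Fin m) (j : Fin n), (i : ℕ) ≠ (j : ℕ) → Sig i j = 0)
    (hSigNonneg : ∀ (i : Fin m) (j : Fin n), (i : ℕ) = (j : ℕ) → 0 ≤ Sig i j)
    (S : Matrix (Fin m ⊕ Fin n) (Fin m ⊕ Fin n) ℝ)
    (hS : S = Matrix.fromBlocks 1 Sig Sigᵀ (-1)) :
    S.charpoly =
      (X - 1) ^ (m - min m n) * (X + 1) ^ (n - min m n) *
        ∏ i : Fin (min m n),
          (X ^ 2 - C ((Sig (Fin.castLE (min_le_left m n) i)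
              (Fin.castLE (min_le_right m n) i)) ^ 2 + 1)) :=
  charpoly_S_block_general m n Sig hSigDiag S hS
end

section
/- If u ∈ ℝ^m satisfies M u ∈ range(P), then Pᵀ u = u; similarly, if v ∈ ℝ^n satisfies N v ∈ range(Qᵀ), then Q v = v. -/
open Matrix

/-- If `u ∈ ℝ^m` satisfies `M u ∈ range(P)`, then `Pᵀ u = u`; similarly, if `v ∈ ℝ^n`
satisfies `N v ∈ range(Qᵀ)`, then `Q v = v`. -/
theorem range_membership_fixed_points (m n k : ℕ)
    (M : Matrix (Fin m) (Fin m) ℝ) (N : Matrix (Fin n) (Fin n) ℝ)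
    (A : Matrix (Fin m) (Fin n) ℝ)
    (hM : M.PosDef) (hN : N.PosDef)
    (Uk : Matrix (Fin m) (Fin k) ℝ) (Vk : Matrix (Fin n) (Fin k) ℝ)
    (Sig : Matrix (Fin k) (Fin k) ℝ)
    (hSigDiag : ∀ i j, i ≠ j → Sig i j = 0) (hSigNonneg : ∀ i, 0 ≤ Sig i i)
    (hUk : Ukᵀ * M * Uk = 1) (hVk : Vkᵀ * N * Vk = 1)
    (hAV : A * Vk = M * Uk * Sig) (hAU : Aᵀ * Uk = N * Vk * Sig)
    (P : Matrix (Fin m) (Fin m) ℝ) (hP : P = 1 - M * Uk * Ukᵀ)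
    (Q : Matrix (Fin n) (Fin n) ℝ) (hQ : Q = 1 - Vk * Vkᵀ * N) :
    (∀ u : Fin m → ℝ, (∃ z, M.mulVec u = P.mulVec z) → Pᵀ.mulVec u = u) ∧
    (∀ v : Fin n → ℝ, (∃ w, N.mulVec v = Qᵀ.mulVec w) → Q.mulVec v = v) := by
  have hMs : Mᵀ = M := hM.isHermitian.eq
  have hNs : Nᵀ = N := hN.isHermitian.eq
  constructor
  · rintro u ⟨z, hz⟩
    have hUP : Ukᵀ * P = 0 := by
      rw [hP, Matrix.mul_sub, Matrix.mul_one, ← Matrix.mul_assoc, ← Matrix.mul_assoc,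
        hUk, Matrix.one_mul, sub_self]
    have key : Ukᵀ.mulVec (M.mulVec u) = 0 := by
      rw [hz, Matrix.mulVec_mulVec, hUP, Matrix.zero_mulVec]
    have hPT : Pᵀ = 1 - Uk * (Ukᵀ * M) := by
      rw [hP, Matrix.transpose_sub, Matrix.transpose_one, Matrix.transpose_mul,
        Matrix.transpose_mul, Matrix.transpose_transpose, hMs]
    rw [hPT, Matrix.sub_mulVec, Matrix.one_mulVec, ← Matrix.mulVec_mulVec,
      ← Matrix.mulVec_mulVec, key, Matrix.mulVec_zero, sub_zero]
  · rintro v ⟨w, hw⟩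
    have hVQ : Vkᵀ * Qᵀ = 0 := by
      rw [hQ, Matrix.transpose_sub, Matrix.transpose_one, Matrix.transpose_mul,
        Matrix.transpose_mul, Matrix.transpose_transpose, hNs, Matrix.mul_sub,
        Matrix.mul_one]
      rw [show Vkᵀ * (N * (Vk * Vkᵀ)) = Vkᵀ * N * Vk * Vkᵀ by
        rw [Matrix.mul_assoc, Matrix.mul_assoc], hVk, Matrix.one_mul, sub_self]
    have key : Vkᵀ.mulVec (N.mulVec v) = 0 := by
      rw [hw, Matrix.mulVec_mulVec, hVQ, Matrix.zero_mulVec]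
    have hQe : Q = 1 - Vk * (Vkᵀ * N) := by rw [hQ, Matrix.mul_assoc]
    rw [hQe, Matrix.sub_mulVec, Matrix.one_mulVec, ← Matrix.mulVec_mulVec,
      ← Matrix.mulVec_mulVec, key, Matrix.mulVec_zero, sub_zero]
end

section
/- Suppose vectors u_0 = 0, u_1, …, u_{J+1} ∈ ℝ^m, v_0 = 0, v_1, …, v_{J+1} ∈ ℝ^n and real scalars α_j, β_j ≠ 0, γ_j ≠ 0 satisfy β_1 M u_1 = P b, γ_1 N v_1 = Qᵀ c, and for all 1 ≤ j ≤ J: β_{j+1} M u_{j+1} = A v_j − γ_j M u_{j−1} − α_j M u_j and γ_{j+1} N v_{j+1} = Aᵀ u_j − β_j N v_{j−1} − α_j N v_j (the generalized Saunders–Simon–Yip recurrences started from the deflated right-hand side). Then for every 1 ≤ j ≤ J+1, M u_j ∈ range(P) and N v_j ∈ range(Qᵀ). -/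
open Matrix

/-- If the generalized Saunders–Simon–Yip recurrences are started from the deflated
right-hand side (`β₁ M u₁ = P b`, `γ₁ N v₁ = Qᵀ c`), then every generated basis vector
satisfies `M u_j ∈ range(P)` and `N v_j ∈ range(Qᵀ)`. -/
theorem gssy_deflated_basis_in_range (m n k : ℕ)
    (M : Matrix (Fin m) (Fin m) ℝ) (N : Matrix (Fin n) (Fin n) ℝ)
    (A : Matrix (Fin m) (Fin n) ℝ)
    (hM : M.PosDef) (hN : N.PosDef)
    (b : Fin m → ℝ) (c : Fin n → ℝ)
    (Uk : Matrix (Fin m) (Fin k) ℝ) (Vk : Matrix (Fin n) (Fin k) ℝ)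
    (Sig : Matrix (Fin k) (Fin k) ℝ)
    (hSigDiag : ∀ i j, i ≠ j → Sig i j = 0) (hSigNonneg : ∀ i, 0 ≤ Sig i i)
    (hUk : Ukᵀ * M * Uk = 1) (hVk : Vkᵀ * N * Vk = 1)
    (hAV : A * Vk = M * Uk * Sig) (hAU : Aᵀ * Uk = N * Vk * Sig)
    (P : Matrix (Fin m) (Fin m) ℝ) (hP : P = 1 - M * Uk * Ukᵀ)
    (Q : Matrix (Fin n) (Fin n) ℝ) (hQ : Q = 1 - Vk * Vkᵀ * N)
    (J : ℕ) (u : ℕ → Fin m → ℝ) (v : ℕ → Fin n → ℝ)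
    (α β γ : ℕ → ℝ)
    (hu0 : u 0 = 0) (hv0 : v 0 = 0)
    (hβ : ∀ j, 1 ≤ j → j ≤ J + 1 → β j ≠ 0)
    (hγ : ∀ j, 1 ≤ j → j ≤ J + 1 → γ j ≠ 0)
    (hu1 : β 1 • M.mulVec (u 1) = P.mulVec b)
    (hv1 : γ 1 • N.mulVec (v 1) = Qᵀ.mulVec c)
    (hrecu : ∀ j, 1 ≤ j → j ≤ J →
      β (j + 1) • M.mulVec (u (j + 1)) =
        A.mulVec (v j) - γ j • M.mulVec (u (j - 1)) - α j • M.mulVec (u j))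
    (hrecv : ∀ j, 1 ≤ j → j ≤ J →
      γ (j + 1) • N.mulVec (v (j + 1)) =
        Aᵀ.mulVec (u j) - β j • N.mulVec (v (j - 1)) - α j • N.mulVec (v j)) :
    ∀ j, 1 ≤ j → j ≤ J + 1 →
      (∃ z, M.mulVec (u j) = P.mulVec z) ∧ (∃ w, N.mulVec (v j) = Qᵀ.mulVec w) := by
  subst hP hQ
  have hMsym : Mᵀ = M := hM.isHermitian.eq
  have hNsym : Nᵀ = N := hN.isHermitian.eq
  have hUP : Ukᵀ * (1 - M * Uk * Ukᵀ) = 0 := by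
    have h1 : Ukᵀ * (M * Uk * Ukᵀ) = Ukᵀ := by
      rw [← Matrix.mul_assoc, ← Matrix.mul_assoc, hUk, Matrix.one_mul]
    rw [Matrix.mul_sub, Matrix.mul_one, h1, sub_self]
  have hQT : (1 - Vk * Vkᵀ * N)ᵀ = 1 - N * Vk * Vkᵀ := by
    simp [transpose_sub, transpose_mul, hNsym, Matrix.mul_assoc]
  have hVQ : Vkᵀ * (1 - N * Vk * Vkᵀ) = 0 := by
    have h1 : Vkᵀ * (N * Vk * Vkᵀ) = Vkᵀ := by
      rw [← Matrix.mul_assoc, ← Matrix.mul_assoc, hVk, Matrix.one_mul]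
    rw [Matrix.mul_sub, Matrix.mul_one, h1, sub_self]
  have hUA : Ukᵀ * A = Sigᵀ * (Vkᵀ * N) := by
    have := congrArg Matrix.transpose hAU
    rw [transpose_mul, transpose_transpose, transpose_mul, transpose_mul, hNsym] at this
    exact this
  have hVAt : Vkᵀ * Aᵀ = Sigᵀ * (Ukᵀ * M) := by
    have := congrArg Matrix.transpose hAV
    rw [transpose_mul, transpose_mul, transpose_mul, hMsym] at this
    exact this
  have key : ∀ j, j ≤ J + 1 →
      (Ukᵀ * M).mulVec (u j) = 0 ∧ (Vkᵀ * N).mulVec (v j) = 0 := by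
    intro j
    induction j using Nat.strong_induction_on with
    | _ j ih =>
      match j with
      | 0 => intro _; simp [hu0, hv0]
      | 1 =>
        intro _
        have hb1 := hβ 1 le_rfl (by omega)
        have hg1 := hγ 1 le_rfl (by omega)
        constructor
        · have := congrArg Ukᵀ.mulVec hu1
          rw [mulVec_smul, mulVec_mulVec, mulVec_mulVec, hUP, Matrix.zero_mulVec] at this
          exact smul_eq_zero.mp this |>.resolve_left hb1
        · have := congrArg Vkᵀ.mulVec hv1
          rw [mulVec_smul, mulVec_mulVec, mulVec_mulVec, hQT, hVQ, Matrix.zero_mulVec] at this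
          exact smul_eq_zero.mp this |>.resolve_left hg1
      | (jj + 2) =>
        intro hle
        have hjJ : jj + 1 ≤ J := by omega
        have ih1 := ih (jj + 1) (by omega) (by omega)
        have ih0 := ih jj (by omega) (by omega)
        have hb := hβ (jj + 2) (by omega) (by omega)
        have hg := hγ (jj + 2) (by omega) (by omega)
        constructor
        · have h := congrArg Ukᵀ.mulVec (hrecu (jj + 1) (by omega) hjJ)
          simp only [Nat.add_sub_cancel, mulVec_smul, mulVec_sub, mulVec_mulVec] at h
          rw [hUA, ih0.1, ih1.1, ← mulVec_mulVec (v (jj + 1)) Sigᵀ (Vkᵀ * N), ih1.2, mulVec_zero] at h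
          simp only [smul_zero, zero_sub, sub_zero, neg_zero, sub_self] at h
          exact smul_eq_zero.mp h |>.resolve_left hb
        · have h := congrArg Vkᵀ.mulVec (hrecv (jj + 1) (by omega) hjJ)
          simp only [Nat.add_sub_cancel, mulVec_smul, mulVec_sub, mulVec_mulVec] at h
          rw [hVAt, ih0.2, ih1.2, ← mulVec_mulVec (u (jj + 1)) Sigᵀ (Ukᵀ * M), ih1.1, mulVec_zero] at h
          simp only [smul_zero, zero_sub, sub_zero, neg_zero, sub_self] at h
          exact smul_eq_zero.mp h |>.resolve_left hg
  intro j hj1 hjJ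
  obtain ⟨hku, hkv⟩ := key j hjJ
  constructor
  · refine ⟨M.mulVec (u j), ?_⟩
    have hz : (M * Uk * Ukᵀ).mulVec (M.mulVec (u j)) = 0 := by
      rw [mulVec_mulVec, Matrix.mul_assoc, ← mulVec_mulVec, hku, mulVec_zero]
    rw [Matrix.sub_mulVec, Matrix.one_mulVec, hz, sub_zero]
  · refine ⟨N.mulVec (v j), ?_⟩
    have hz : (N * Vk * Vkᵀ).mulVec (N.mulVec (v j)) = 0 := by
      rw [mulVec_mulVec, Matrix.mul_assoc, ← mulVec_mulVec, hkv, mulVec_zero]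
    rw [hQT, Matrix.sub_mulVec, Matrix.one_mulVec, hz, sub_zero]
end
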